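/- arXiv:2510.04289 — 5 statements merged into one kernel-verified Lean document; each statement's English description precedes it below -/
import Mathlib

section
/- Let τ₀ < τ be real numbers, let α, β : [τ₀, τ] → ℝ be Lipschitz continuous, let σ : [τ₀, τ] × ℝ → ℝ be bounded and Lipschitz continuous with σ(t,x)² ≥ λ₀ for all (t,x) and some constant λ₀ > 0, and let φ : ℝ → ℝ be continuous with |φ(x)| ≤ C̄·exp(c̄|x|) for some constants C̄, c̄ > 0. If f₁ and f₂ are both continuous on [τ₀, τ] × ℝ, of class C^{1,2} on [τ₀, τ) × ℝ, satisfy ∂ₜfᵢ(t,x) + (α(t) + β(t)x)·∂ₓfᵢ(t,x) + (1/2)·σ(t,x)²·∂²ₓₓfᵢ(t,x) − x·fᵢ(t,x) = 0 on [τ₀, τ) × ℝ and fᵢ(τ, x) = φ(x) for all x, and each satisfies a growth bound |fᵢ(t,x)| ≤ K̄ᵢ·exp(kᵢ|x|) for some constants K̄ᵢ, kᵢ > 0, then f₁ = f₂ on [τ₀, τ] × ℝ. -/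
set_option maxHeartbeats 1000000

open Set Filter Real

section Helpers

lemma deriv_nonneg_of_right_min (f : ℝ → ℝ) (a b : ℝ) (hab : a < b)
    (hd : DifferentiableAt ℝ f a) (hmin : ∀ t ∈ Set.Icc a b, f a ≤ f t) :
    0 ≤ deriv f a := by
  have h := hd.hasDerivAt.hasDerivWithinAt (s := Set.Ioi a)
  rw [hasDerivWithinAt_iff_tendsto_slope' (notMem_Ioi.2 le_rfl)] at h
  have hev : ∀ᶠ t in nhdsWithin a (Set.Ioi a), 0 ≤ slope f a t := by
    filter_upwards [Ioc_mem_nhdsGT_of_mem (Set.mem_Ico.2 ⟨le_rfl, hab⟩)] with t ht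
    have h1 : 0 ≤ f t - f a := sub_nonneg.2 (hmin t ⟨ht.1.le, ht.2⟩)
    have h2 : 0 < t - a := sub_pos.2 ht.1
    rw [slope_def_field]
    exact div_nonneg h1 h2.le
  exact ge_of_tendsto h hev

lemma contdiff2_diff (f : ℝ → ℝ) (hf : ContDiff ℝ 2 f) :
    Differentiable ℝ f ∧ Differentiable ℝ (deriv f) ∧ Continuous (deriv (deriv f)) := by
  have h2 : ContDiff ℝ ((1 : ℕ∞) + 1) f := by norm_num at hf ⊢; exact hf
  rw [contDiff_succ_iff_deriv] at h2
  have h1 : ContDiff ℝ ((0 : ℕ∞) + 1) (deriv f) := by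
    have := h2.2.2; norm_num at this ⊢; exact this
  rw [contDiff_succ_iff_deriv] at h1
  exact ⟨h2.1, h1.1, h1.2.2.continuous⟩

lemma second_deriv_nonneg_of_isLocalMin (f : ℝ → ℝ) (x : ℝ)
    (hf : ContDiff ℝ 2 f) (hmin : IsLocalMin f x) :
    0 ≤ deriv (deriv f) x := by
  by_contra hneg
  push_neg at hneg
  obtain ⟨hd, hd1, hc2⟩ := contdiff2_diff f hf
  obtain ⟨r, hr, hball⟩ := Metric.eventually_nhds_iff.1
    (hc2.continuousAt.eventually_lt continuousAt_const hneg)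
  have hanti : StrictAntiOn (deriv f) (Set.Icc x (x + r/2)) := by
    apply strictAntiOn_of_deriv_neg (convex_Icc _ _) (hd1.continuous.continuousOn)
    intro y hy
    rw [interior_Icc] at hy
    apply hball
    rw [Real.dist_eq, abs_lt]
    constructor <;> [linarith [hy.1]; linarith [hy.2]]
  have hfanti : StrictAntiOn f (Set.Icc x (x + r/2)) := by
    apply strictAntiOn_of_deriv_neg (convex_Icc _ _) (hd.continuous.continuousOn)
    intro y hy
    rw [interior_Icc] at hy
    have := hanti ⟨le_rfl, by linarith [hr]⟩ ⟨hy.1.le, hy.2.le⟩ hy.1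
    rw [hmin.deriv_eq_zero] at this
    exact this
  obtain ⟨δ, hδ, hδmin⟩ := Metric.eventually_nhds_iff.1 hmin
  set y := x + min δ r / 2 with hy
  have hmd : 0 < min δ r := lt_min hδ hr
  have hyr : min δ r ≤ r := min_le_right _ _
  have hyd : min δ r ≤ δ := min_le_left _ _
  have hxy : x < y := by rw [hy]; linarith
  have hyb : y ≤ x + r/2 := by rw [hy]; linarith
  have h1 : f y < f x :=
    hfanti ⟨le_rfl, by linarith⟩ ⟨hxy.le, hyb⟩ hxy
  have h2 : f x ≤ f y := by
    apply hδmin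
    rw [Real.dist_eq, hy]
    rw [show x + min δ r / 2 - x = min δ r / 2 by ring, abs_of_nonneg (by linarith)]
    linarith
  linarith

end Helpers

/-- One-sided comparison on a short time slice. -/
lemma comparison_slice
    (a b : ℝ) (hab : a < b)
    (μ σ2 : ℝ → ℝ → ℝ) (M S : ℝ) (hM : 0 ≤ M) (hS : 0 ≤ S)
    (hμ : ∀ t ∈ Set.Icc a b, ∀ x : ℝ, |μ t x| ≤ M * (1 + |x|))
    (hσ2 : ∀ t ∈ Set.Icc a b, ∀ x : ℝ, 0 ≤ σ2 t x ∧ σ2 t x ≤ S)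
    (hlen : (8*M + 10*S + 2) * (b - a) ≤ 1)
    (u : ℝ → ℝ → ℝ)
    (hu_cont : ContinuousOn (fun p : ℝ × ℝ => u p.1 p.2) (Set.Icc a b ×ˢ Set.univ))
    (hu_t : ∀ x : ℝ, ∀ t ∈ Set.Ico a b, DifferentiableAt ℝ (fun s => u s x) t)
    (hu_x : ∀ t ∈ Set.Ico a b, ContDiff ℝ 2 (fun x => u t x))
    (hpde : ∀ t ∈ Set.Ico a b, ∀ x : ℝ,
      deriv (fun s => u s x) t + μ t x * deriv (fun y => u t y) x
        + (1/2) * σ2 t x * deriv (deriv (fun y => u t y)) x - x * u t x = 0)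
    (hterm : ∀ x : ℝ, u b x = 0)
    (K k : ℝ) (hK : 0 < K) (hk : 0 < k)
    (hgrow : ∀ t ∈ Set.Icc a b, ∀ x : ℝ, |u t x| ≤ K * Real.exp (k * |x|)) :
    ∀ t ∈ Set.Icc a b, ∀ x : ℝ, u t x ≤ 0 := by
  set κ : ℝ := 8*M + 10*S + 2 with hκdef
  have hκpos : 0 < κ := by positivity
  set θ : ℝ → ℝ := fun s => 1 + κ * (b - s) with hθdef
  set v : ℝ → ℝ → ℝ := fun s y => Real.exp (θ s * (y^2 + 1)) with hvdef
  clear_value v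
  clear_value θ
  clear_value κ
  have hvpos : ∀ s y, 0 < v s y := by rw [hvdef]; exact fun s y => Real.exp_pos _
  have hθ1 : ∀ t ∈ Set.Icc a b, 1 ≤ θ t ∧ θ t ≤ 2 := by
    intro t ht
    constructor
    · simp only [hθdef]; nlinarith [ht.2, hκpos.le]
    · simp only [hθdef]
      have : κ * (b - t) ≤ κ * (b - a) := by
        apply mul_le_mul_of_nonneg_left (by linarith [ht.1]) hκpos.le
      linarith
  -- derivatives of the barrier
  have hθd : ∀ t, HasDerivAt θ (-κ) t := by
    intro t
    rw [hθdef]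
    simpa using ((hasDerivAt_id t).const_sub b).const_mul κ |>.const_add 1
  have hvt : ∀ (x t : ℝ), HasDerivAt (fun s => v s x) (-κ * (x^2+1) * v t x) t := by
    intro x t
    have h1 : HasDerivAt (fun s => θ s * (x^2+1)) (-κ * (x^2+1)) t := (hθd t).mul_const _
    have h2 := h1.exp
    simp only [hvdef]
    convert h2 using 1
    ring
  have hvx : ∀ (t x : ℝ), HasDerivAt (fun y => v t y) (θ t * (2*x) * v t x) x := by
    intro t x
    have h1 : HasDerivAt (fun y : ℝ => θ t * (y^2+1)) (θ t * (2*x)) x := by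
      have : HasDerivAt (fun y : ℝ => y^2 + 1) (2*x) x := by
        simpa using ((hasDerivAt_pow 2 x).add_const 1)
      simpa using this.const_mul (θ t)
    have h2 := h1.exp
    simp only [hvdef]
    convert h2 using 1
    ring
  have hvx' : ∀ t, deriv (fun y => v t y) = fun y => θ t * (2*y) * v t y :=
    fun t => funext fun y => (hvx t y).deriv
  have hvxx : ∀ (t x : ℝ),
      HasDerivAt (fun y => θ t * (2*y) * v t y) ((2*θ t + 4*(θ t)^2*x^2) * v t x) x := by
    intro t x
    have h1 : HasDerivAt (fun y : ℝ => θ t * (2*y)) (θ t * 2) x := by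
      simpa using (hasDerivAt_id x).const_mul (2:ℝ) |>.const_mul (θ t)
    have h2 : HasDerivAt (fun y => θ t * (2*y) * v t y) _ x := h1.mul (hvx t x)
    convert h2 using 1
    ring
  have hvcont : Continuous (fun p : ℝ × ℝ => v p.1 p.2) := by
    rw [hvdef, hθdef]
    fun_prop
  have hvcd : ∀ t, ContDiff ℝ 2 (fun y => v t y) := by
    intro t
    rw [hvdef]
    apply ContDiff.exp
    exact (contDiff_const.mul ((contDiff_id.pow 2).add contDiff_const)).of_le le_top
  -- strict supersolution property of the barrier
  have hLv : ∀ t ∈ Set.Icc a b, ∀ x : ℝ,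
      (-κ * (x^2+1) * v t x) + μ t x * (θ t * (2*x) * v t x)
        + (1/2) * σ2 t x * ((2*θ t + 4*(θ t)^2*x^2) * v t x) - x * v t x
        ≤ -(v t x) := by
    intro t ht x
    obtain ⟨hθa, hθb⟩ := hθ1 t ht
    obtain ⟨hs0, hsS⟩ := hσ2 t ht x
    have hx1 : |x| ≤ x^2 + 1 := by nlinarith [sq_abs x, abs_nonneg x, sq_nonneg (|x| - 1)]
    have hx0 : (0:ℝ) ≤ x^2 + 1 := by positivity
    have hμb := hμ t ht x
    -- bound the drift term
    have hdrift : μ t x * (θ t * (2*x)) ≤ 8*M*(x^2+1) := by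
      calc μ t x * (θ t * (2*x)) ≤ |μ t x * (θ t * (2*x))| := le_abs_self _
        _ = |μ t x| * (θ t * (2*|x|)) := by
            rw [abs_mul, abs_mul, abs_mul]
            rw [abs_of_nonneg (by linarith : (0:ℝ) ≤ θ t), abs_of_nonneg (by norm_num : (0:ℝ) ≤ (2:ℝ))]
        _ ≤ (M * (1 + |x|)) * (2 * (2*|x|)) := by
            apply mul_le_mul hμb _ (by positivity) (by positivity)
            apply mul_le_mul_of_nonneg_right hθb (by positivity)
        _ ≤ 8*M*(x^2+1) := by nlinarith [abs_nonneg x, sq_abs x]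
    -- bound the diffusion term
    have hdiff : (1/2) * σ2 t x * (2*θ t + 4*(θ t)^2*x^2) ≤ 10*S*(x^2+1) := by
      have hA : 0 ≤ 2*θ t + 4*(θ t)^2*x^2 := by nlinarith [sq_nonneg x, sq_nonneg (θ t)]
      have hθsq : (θ t)^2 ≤ 4 := by nlinarith
      have hB : 2*θ t + 4*(θ t)^2*x^2 ≤ 4 + 16*x^2 := by
        nlinarith [sq_nonneg x, mul_le_mul_of_nonneg_right hθsq (sq_nonneg x)]
      have : σ2 t x * (2*θ t + 4*(θ t)^2*x^2) ≤ S * (4 + 16*x^2) :=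
        mul_le_mul hsS hB hA hS
      nlinarith [sq_nonneg x, mul_nonneg hS (sq_nonneg x)]
    have hxterm : -x ≤ x^2 + 1 := by
      have := neg_abs_le x; linarith
    have hE : -κ * (x^2+1) + μ t x * (θ t * (2*x))
        + (1/2) * σ2 t x * (2*θ t + 4*(θ t)^2*x^2) - x ≤ -1 := by
      have h1 : (1:ℝ) ≤ x^2 + 1 := by nlinarith [sq_nonneg x]
      simp only [hκdef]
      nlinarith [hdrift, hdiff, hxterm]
    have hvp := hvpos t x
    calc (-κ * (x^2+1) * v t x) + μ t x * (θ t * (2*x) * v t x)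
        + (1/2) * σ2 t x * ((2*θ t + 4*(θ t)^2*x^2) * v t x) - x * v t x
        = (-κ * (x^2+1) + μ t x * (θ t * (2*x))
            + (1/2) * σ2 t x * (2*θ t + 4*(θ t)^2*x^2) - x) * v t x := by ring
      _ ≤ (-1) * v t x := mul_le_mul_of_nonneg_right hE hvp.le
      _ = -(v t x) := by ring

  -- main argument
  intro t₀ ht₀ x₀
  have hEpos : (0:ℝ) < Real.exp (2*(x₀^2+1)) := Real.exp_pos _
  have key : ∀ ε : ℝ, 0 < ε → u t₀ x₀ ≤ ε * Real.exp (2*(x₀^2+1)) := by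
    intro ε hε
    obtain ⟨L, hLdef⟩ : ∃ L : ℝ, L = max 0 (Real.log (K / ε)) := ⟨_, rfl⟩
    have hL0 : 0 ≤ L := hLdef ▸ le_max_left _ _
    obtain ⟨R, hRdef⟩ : ∃ R : ℝ, R = |x₀| + k + 1 + L := ⟨_, rfl⟩
    have hax : 0 ≤ |x₀| := abs_nonneg _
    have hRpos : 0 < R := by rw [hRdef]; linarith
    have hx₀R : |x₀| ≤ R := by rw [hRdef]; linarith
    have hKε : K * Real.exp (k * R) ≤ ε * Real.exp (R^2) := by
      have hlog : Real.log K - Real.log ε ≤ L := by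
        have h := Real.log_div (ne_of_gt hK) (ne_of_gt hε)
        rw [hLdef, ← h]
        exact le_max_right _ _
      have h1 : 1 + L ≤ R := by rw [hRdef]; linarith
      have h2 : 1 + L ≤ R - k := by rw [hRdef]; linarith
      have h3 : (1+L)*(1+L) ≤ R*(R-k) := mul_le_mul h1 h2 (by linarith) (by linarith)
      have h4 : Real.log K + k*R ≤ Real.log ε + R^2 := by nlinarith
      calc K * Real.exp (k*R) = Real.exp (Real.log K + k*R) := by
            rw [Real.exp_add, Real.exp_log hK]
        _ ≤ Real.exp (Real.log ε + R^2) := Real.exp_le_exp.2 h4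
        _ = ε * Real.exp (R^2) := by rw [Real.exp_add, Real.exp_log hε]
    set Q : Set (ℝ×ℝ) := Set.Icc a b ×ˢ Set.Icc (-R) R with hQdef
    have hQc : IsCompact Q := isCompact_Icc.prod isCompact_Icc
    have hx₀mem : x₀ ∈ Set.Icc (-R) R := abs_le.1 hx₀R
    have hptQ : (t₀, x₀) ∈ Q := ⟨ht₀, hx₀mem⟩
    have hQne : Q.Nonempty := ⟨(t₀, x₀), hptQ⟩
    set z : ℝ×ℝ → ℝ := fun q => (ε * v q.1 q.2 - u q.1 q.2) / v q.1 q.2 with hzdef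
    have hQsub : Q ⊆ Set.Icc a b ×ˢ Set.univ := Set.prod_mono_right (Set.subset_univ _)
    have hzc : ContinuousOn z Q := by
      rw [hzdef]
      apply ContinuousOn.div
      · exact ((continuous_const.mul hvcont).continuousOn.sub (hu_cont.mono hQsub))
      · exact hvcont.continuousOn
      · exact fun q _ => (hvpos q.1 q.2).ne'
    obtain ⟨p, hpQ, hpmin⟩ := hQc.exists_isMinOn hQne hzc
    have hpmin' : ∀ q ∈ Q, z p ≤ z q := fun q hq => hpmin hq
    have hvb : v t₀ x₀ ≤ Real.exp (2*(x₀^2+1)) := by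
      rw [hvdef]
      apply Real.exp_le_exp.2
      have h2 := (hθ1 t₀ ht₀).2
      nlinarith [sq_nonneg x₀]
    by_cases hm0 : 0 ≤ z p
    · have h0 : 0 ≤ z (t₀, x₀) := le_trans hm0 (hpmin' _ hptQ)
      have h1 : ε * v t₀ x₀ - u t₀ x₀ = z (t₀,x₀) * v t₀ x₀ := by
        rw [hzdef]
        rw [div_mul_cancel₀ _ (hvpos t₀ x₀).ne']
      have h2 : 0 ≤ ε * v t₀ x₀ - u t₀ x₀ := by
        rw [h1]; exact mul_nonneg h0 (hvpos _ _).le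
      have h3 := mul_le_mul_of_nonneg_left hvb hε.le
      linarith
    · push_neg at hm0
      obtain ⟨m, hmdef⟩ : ∃ m : ℝ, m = z p := ⟨_, rfl⟩
      have hmneg : m < 0 := hmdef ▸ hm0
      obtain ⟨hpt, hpx⟩ := hpQ
      -- p.1 < b
      have hp1b : p.1 < b := by
        rcases lt_or_eq_of_le hpt.2 with h | h
        · exact h
        · exfalso
          have hz0 : z p = ε := by
            rw [hzdef]
            simp only
            rw [h, hterm p.2, sub_zero, mul_div_assoc, div_self (hvpos b p.2).ne', mul_one]
          rw [hz0] at hm0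
          linarith
      have hp1 : p.1 ∈ Set.Ico a b := ⟨hpt.1, hp1b⟩
      -- lateral boundary nonneg
      have hlat : ∀ s ∈ Set.Icc a b, ∀ y : ℝ, |y| = R → 0 ≤ z (s,y) := by
        intro s hs y hy
        rw [hzdef]
        apply div_nonneg _ (hvpos s y).le
        have h1 : u s y ≤ K * Real.exp (k * R) := by
          calc u s y ≤ |u s y| := le_abs_self _
            _ ≤ K * Real.exp (k*|y|) := hgrow s hs y
            _ = K * Real.exp (k*R) := by rw [hy]
        have hy2 : y^2 = R^2 := by rw [← sq_abs y, hy]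
        have h2 : ε * Real.exp (R^2) ≤ ε * v s y := by
          apply mul_le_mul_of_nonneg_left _ hε.le
          rw [hvdef]
          apply Real.exp_le_exp.2
          have hθs := (hθ1 s hs).1
          nlinarith [sq_nonneg y]
        simp only
        linarith
      have hpx2 : p.2 ∈ Set.Ioo (-R) R := by
        constructor
        · rcases lt_or_eq_of_le hpx.1 with h | h
          · exact h
          · exfalso
            have habs : |p.2| = R := by rw [← h, abs_neg, abs_of_pos hRpos]
            have := hlat p.1 hpt p.2 habs
            rw [hmdef] at hmneg
            simp only [Prod.mk.eta] at this
            linarith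
        · rcases lt_or_eq_of_le hpx.2 with h | h
          · exact h
          · exfalso
            have habs : |p.2| = R := by rw [h, abs_of_pos hRpos]
            have := hlat p.1 hpt p.2 habs
            rw [hmdef] at hmneg
            simp only [Prod.mk.eta] at this
            linarith
      obtain ⟨c, hcdef⟩ : ∃ c : ℝ, c = ε - m := ⟨_, rfl⟩
      have hcpos : 0 < c := by rw [hcdef]; linarith
      set g : ℝ → ℝ → ℝ := fun s y => c * v s y - u s y with hgdef
      clear_value g
      -- g nonneg on Q, zero at p
      have hgQ : ∀ s y : ℝ, (s,y) ∈ Q → 0 ≤ g s y := by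
        intro s y hsy
        have h1 : m ≤ z (s,y) := hmdef ▸ hpmin' _ hsy
        rw [hzdef] at h1
        simp only at h1
        have h2 := (le_div_iff₀ (hvpos s y)).1 h1
        rw [hgdef, hcdef]
        simp only
        linarith
      have hzp : ε * v p.1 p.2 - u p.1 p.2 = m * v p.1 p.2 := by
        have h1 : (ε * v p.1 p.2 - u p.1 p.2) / v p.1 p.2 = m := by
          rw [hmdef, hzdef]
        exact (div_eq_iff (hvpos p.1 p.2).ne').1 h1
      have hgp : g p.1 p.2 = 0 := by
        rw [hgdef, hcdef]
        simp only
        linarith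
      -- time derivative
      have hgt : HasDerivAt (fun s => g s p.2)
          (c * (-κ * (p.2^2+1) * v p.1 p.2) - deriv (fun s => u s p.2) p.1) p.1 := by
        simp only [hgdef]
        exact ((hvt p.2 p.1).const_mul c).sub (hu_t p.2 p.1 hp1).hasDerivAt
      have h_t : 0 ≤ c * (-κ * (p.2^2+1) * v p.1 p.2) - deriv (fun s => u s p.2) p.1 := by
        rw [← hgt.deriv]
        apply deriv_nonneg_of_right_min _ p.1 b hp1b hgt.differentiableAt
        intro s hs
        have h1 : (s, p.2) ∈ Q := ⟨⟨le_trans hpt.1 hs.1, hs.2⟩, hpx⟩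
        simp only [hgp]
        exact hgQ s p.2 h1
      -- space derivatives
      have hψcd : ContDiff ℝ 2 (fun y => g p.1 y) := by
        simp only [hgdef]
        exact (contDiff_const.mul (hvcd p.1)).sub (hu_x p.1 hp1)
      have hloc : IsLocalMin (fun y => g p.1 y) p.2 := by
        apply Filter.eventually_of_mem (isOpen_Ioo.mem_nhds hpx2)
        intro y hy
        have h1 : (p.1, y) ∈ Q := ⟨hpt, ⟨hy.1.le, hy.2.le⟩⟩
        simp only [hgp]
        exact hgQ p.1 y h1
      have hx1 : deriv (fun y => g p.1 y) p.2 = 0 := hloc.deriv_eq_zero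
      have hx2 : 0 ≤ deriv (deriv (fun y => g p.1 y)) p.2 :=
        second_deriv_nonneg_of_isLocalMin _ _ hψcd hloc
      obtain ⟨hud, hud1, _⟩ := contdiff2_diff _ (hu_x p.1 hp1)
      have hgx' : deriv (fun y => g p.1 y)
          = fun y => c * (θ p.1 * (2*y) * v p.1 y) - deriv (fun y' => u p.1 y') y := by
        funext y
        have h1 : HasDerivAt (fun y' => g p.1 y')
            (c * (θ p.1 * (2*y) * v p.1 y) - deriv (fun y' => u p.1 y') y) y := by
          simp only [hgdef]
          exact ((hvx p.1 y).const_mul c).sub (hud y).hasDerivAt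
        exact h1.deriv
      have hgxx : deriv (deriv (fun y => g p.1 y)) p.2
          = c * ((2*θ p.1 + 4*(θ p.1)^2*p.2^2) * v p.1 p.2)
            - deriv (deriv (fun y => u p.1 y)) p.2 := by
        rw [hgx']
        exact (((hvxx p.1 p.2).const_mul c).sub (hud1 p.2).hasDerivAt).deriv
      have hux_eq : deriv (fun y => u p.1 y) p.2 = c * (θ p.1 * (2*p.2) * v p.1 p.2) := by
        have h1 := hx1
        rw [hgx'] at h1
        simp only at h1
        linarith
      have hu_eq : u p.1 p.2 = c * v p.1 p.2 := by
        have := hgp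
        rw [hgdef, hcdef] at this
        simp only at this
        rw [hcdef]
        linarith
      -- assemble contradiction
      have hpde' := hpde p.1 hp1 p.2
      have hLvp := hLv p.1 hpt p.2
      obtain ⟨hs0, _⟩ := hσ2 p.1 hpt p.2
      have e2 : deriv (deriv (fun y => u p.1 y)) p.2
          ≤ c * ((2*θ p.1 + 4*(θ p.1)^2*p.2^2) * v p.1 p.2) := by
        rw [hgxx] at hx2
        linarith
      have e3 : (1/2) * σ2 p.1 p.2 * deriv (deriv (fun y => u p.1 y)) p.2
          ≤ (1/2) * σ2 p.1 p.2 * (c * ((2*θ p.1 + 4*(θ p.1)^2*p.2^2) * v p.1 p.2)) := by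
        apply mul_le_mul_of_nonneg_left e2
        linarith
      have e4 := mul_le_mul_of_nonneg_left hLvp hcpos.le
      have e5 := mul_pos hcpos (hvpos p.1 p.2)
      have e1 : deriv (fun s => u s p.2) p.1 ≤ c * (-κ * (p.2^2+1) * v p.1 p.2) := by
        linarith
      exfalso
      rw [hux_eq, hu_eq] at hpde'
      have step : (0:ℝ) ≤ c * (-(v p.1 p.2)) := by
        calc (0:ℝ) = deriv (fun s => u s p.2) p.1
              + μ p.1 p.2 * (c * (θ p.1 * (2*p.2) * v p.1 p.2))
              + (1/2) * σ2 p.1 p.2 * deriv (deriv (fun y => u p.1 y)) p.2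
              - p.2 * (c * v p.1 p.2) := hpde'.symm
          _ ≤ c * (-κ * (p.2^2+1) * v p.1 p.2)
              + μ p.1 p.2 * (c * (θ p.1 * (2*p.2) * v p.1 p.2))
              + (1/2) * σ2 p.1 p.2 * (c * ((2*θ p.1 + 4*(θ p.1)^2*p.2^2) * v p.1 p.2))
              - p.2 * (c * v p.1 p.2) := by linarith
          _ = c * ((-κ * (p.2^2+1) * v p.1 p.2) + μ p.1 p.2 * (θ p.1 * (2*p.2) * v p.1 p.2)
              + (1/2) * σ2 p.1 p.2 * ((2*θ p.1 + 4*(θ p.1)^2*p.2^2) * v p.1 p.2)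
              - p.2 * v p.1 p.2) := by ring
          _ ≤ c * (-(v p.1 p.2)) := e4
      have : c * (-(v p.1 p.2)) = -(c * v p.1 p.2) := by ring
      linarith [e5, step]
  -- conclude
  by_contra hpos
  push_neg at hpos
  have h1 := key (u t₀ x₀ / (2 * Real.exp (2*(x₀^2+1)))) (by positivity)
  have h2 : u t₀ x₀ / (2 * Real.exp (2*(x₀^2+1))) * Real.exp (2*(x₀^2+1)) = u t₀ x₀ / 2 := by
    field_simp
  rw [h2] at h1
  linarith


/-- Two-sided version: the solution vanishes on the slice. -/
lemma slice_zero
    (a b : ℝ) (hab : a < b)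
    (μ σ2 : ℝ → ℝ → ℝ) (M S : ℝ) (hM : 0 ≤ M) (hS : 0 ≤ S)
    (hμ : ∀ t ∈ Set.Icc a b, ∀ x : ℝ, |μ t x| ≤ M * (1 + |x|))
    (hσ2 : ∀ t ∈ Set.Icc a b, ∀ x : ℝ, 0 ≤ σ2 t x ∧ σ2 t x ≤ S)
    (hlen : (8*M + 10*S + 2) * (b - a) ≤ 1)
    (u : ℝ → ℝ → ℝ)
    (hu_cont : ContinuousOn (fun p : ℝ × ℝ => u p.1 p.2) (Set.Icc a b ×ˢ Set.univ))
    (hu_t : ∀ x : ℝ, ∀ t ∈ Set.Ico a b, DifferentiableAt ℝ (fun s => u s x) t)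
    (hu_x : ∀ t ∈ Set.Ico a b, ContDiff ℝ 2 (fun x => u t x))
    (hpde : ∀ t ∈ Set.Ico a b, ∀ x : ℝ,
      deriv (fun s => u s x) t + μ t x * deriv (fun y => u t y) x
        + (1/2) * σ2 t x * deriv (deriv (fun y => u t y)) x - x * u t x = 0)
    (hterm : ∀ x : ℝ, u b x = 0)
    (K k : ℝ) (hK : 0 < K) (hk : 0 < k)
    (hgrow : ∀ t ∈ Set.Icc a b, ∀ x : ℝ, |u t x| ≤ K * Real.exp (k * |x|)) :
    ∀ t ∈ Set.Icc a b, ∀ x : ℝ, u t x = 0 := by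
  have h1 := comparison_slice a b hab μ σ2 M S hM hS hμ hσ2 hlen u hu_cont hu_t hu_x
    hpde hterm K k hK hk hgrow
  have h2 := comparison_slice a b hab μ σ2 M S hM hS hμ hσ2 hlen
    (fun t x => -(u t x)) (hu_cont.neg)
    (fun x t ht => (hu_t x t ht).neg)
    (fun t ht => (hu_x t ht).neg)
    (by
      intro t ht x
      have hp := hpde t ht x
      have e1 : deriv (fun s => -(u s x)) t = -(deriv (fun s => u s x) t) := deriv.fun_neg
      have e2 : deriv (fun y => -(u t y)) x = -(deriv (fun y => u t y) x) := deriv.fun_neg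
      have e3 : deriv (fun y => -(u t y)) = fun y => -(deriv (fun y' => u t y') y) :=
        funext fun y => deriv.fun_neg
      have e4 : deriv (deriv (fun y => -(u t y))) x = -(deriv (deriv (fun y => u t y)) x) := by
        rw [e3]; exact deriv.fun_neg
      rw [e1, e2, e4]
      linarith)
    (by intro x; rw [hterm x, neg_zero])
    K k hK hk
    (by intro t ht x; simp only [abs_neg]; exact hgrow t ht x)
  intro t ht x
  have := h1 t ht x
  have h2' := h2 t ht x
  simp only [neg_nonpos] at h2'
  linarith [h2']

/-- `f` is of class `C^{1,2}` on `I × ℝ`: it is jointly continuous there, once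
continuously differentiable in the time variable and twice continuously
differentiable in the space variable. -/
def C12On (f : ℝ → ℝ → ℝ) (I : Set ℝ) : Prop :=
  ContinuousOn (fun p : ℝ × ℝ => f p.1 p.2) (I ×ˢ (Set.univ : Set ℝ)) ∧
  (∀ x : ℝ, ∀ t ∈ I, DifferentiableAt ℝ (fun s => f s x) t) ∧
  (∀ t ∈ I, ContDiff ℝ 2 (fun x => f t x)) ∧
  ContinuousOn (fun p : ℝ × ℝ => deriv (fun s => f s p.2) p.1) (I ×ˢ (Set.univ : Set ℝ)) ∧
  ContinuousOn (fun p : ℝ × ℝ => deriv (fun x => f p.1 x) p.2) (I ×ˢ (Set.univ : Set ℝ)) ∧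
  ContinuousOn (fun p : ℝ × ℝ => deriv (deriv (fun x => f p.1 x)) p.2) (I ×ˢ (Set.univ : Set ℝ))

/-- Uniqueness, within the class of functions of exponential growth, of the solution
to the backward pricing PDE with terminal datum `φ`. -/
theorem uniqueness_pricing_pde_exponential_growth
    (τ₀ τ : ℝ) (hττ : τ₀ < τ)
    (α β : ℝ → ℝ)
    (hα : ∃ K : NNReal, LipschitzOnWith K α (Set.Icc τ₀ τ))
    (hβ : ∃ K : NNReal, LipschitzOnWith K β (Set.Icc τ₀ τ))
    (σ : ℝ → ℝ → ℝ)
    (hσbdd : ∃ Cσ : ℝ, ∀ t ∈ Set.Icc τ₀ τ, ∀ x : ℝ, |σ t x| ≤ Cσ)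
    (hσlip : ∃ K : NNReal,
      LipschitzOnWith K (fun p : ℝ × ℝ => σ p.1 p.2) (Set.Icc τ₀ τ ×ˢ (Set.univ : Set ℝ)))
    (lam₀ : ℝ) (hlam₀ : 0 < lam₀)
    (hσlb : ∀ t ∈ Set.Icc τ₀ τ, ∀ x : ℝ, lam₀ ≤ (σ t x) ^ 2)
    (φ : ℝ → ℝ) (hφ : Continuous φ)
    (Cbar cbar : ℝ) (hCbar : 0 < Cbar) (hcbar : 0 < cbar)
    (hφg : ∀ x : ℝ, |φ x| ≤ Cbar * Real.exp (cbar * |x|))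
    (f₁ f₂ : ℝ → ℝ → ℝ)
    (hcont₁ : ContinuousOn (fun p : ℝ × ℝ => f₁ p.1 p.2) (Set.Icc τ₀ τ ×ˢ (Set.univ : Set ℝ)))
    (hcont₂ : ContinuousOn (fun p : ℝ × ℝ => f₂ p.1 p.2) (Set.Icc τ₀ τ ×ˢ (Set.univ : Set ℝ)))
    (hC12₁ : C12On f₁ (Set.Ico τ₀ τ)) (hC12₂ : C12On f₂ (Set.Ico τ₀ τ))
    (hpde₁ : ∀ t ∈ Set.Ico τ₀ τ, ∀ x : ℝ,
      deriv (fun s => f₁ s x) t + (α t + β t * x) * deriv (fun y => f₁ t y) x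
        + (1 / 2) * (σ t x) ^ 2 * deriv (deriv (fun y => f₁ t y)) x - x * f₁ t x = 0)
    (hpde₂ : ∀ t ∈ Set.Ico τ₀ τ, ∀ x : ℝ,
      deriv (fun s => f₂ s x) t + (α t + β t * x) * deriv (fun y => f₂ t y) x
        + (1 / 2) * (σ t x) ^ 2 * deriv (deriv (fun y => f₂ t y)) x - x * f₂ t x = 0)
    (hterm₁ : ∀ x : ℝ, f₁ τ x = φ x) (hterm₂ : ∀ x : ℝ, f₂ τ x = φ x)
    (hgrow₁ : ∃ Kbar k : ℝ, 0 < Kbar ∧ 0 < k ∧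
      ∀ t ∈ Set.Icc τ₀ τ, ∀ x : ℝ, |f₁ t x| ≤ Kbar * Real.exp (k * |x|))
    (hgrow₂ : ∃ Kbar k : ℝ, 0 < Kbar ∧ 0 < k ∧
      ∀ t ∈ Set.Icc τ₀ τ, ∀ x : ℝ, |f₂ t x| ≤ Kbar * Real.exp (k * |x|)) :
    ∀ t ∈ Set.Icc τ₀ τ, ∀ x : ℝ, f₁ t x = f₂ t x := by
  obtain ⟨Kα, hLα⟩ := hα
  obtain ⟨Kβ, hLβ⟩ := hβ
  obtain ⟨Cσ, hCσ⟩ := hσbdd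
  obtain ⟨K₁, k₁, hK₁, hk₁, hg₁⟩ := hgrow₁
  obtain ⟨K₂, k₂, hK₂, hk₂, hg₂⟩ := hgrow₂
  have hτ₀mem : τ₀ ∈ Set.Icc τ₀ τ := ⟨le_rfl, hττ.le⟩
  -- bounds on the drift coefficients
  obtain ⟨Mα, hMαdef⟩ : ∃ Mα : ℝ, Mα = |α τ₀| + (Kα : ℝ) * (τ - τ₀) := ⟨_, rfl⟩
  obtain ⟨Mβ, hMβdef⟩ : ∃ Mβ : ℝ, Mβ = |β τ₀| + (Kβ : ℝ) * (τ - τ₀) := ⟨_, rfl⟩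
  have hMα0 : 0 ≤ Mα := by
    rw [hMαdef]
    have := mul_nonneg Kα.coe_nonneg (by linarith : (0:ℝ) ≤ τ - τ₀)
    linarith [abs_nonneg (α τ₀)]
  have hMβ0 : 0 ≤ Mβ := by
    rw [hMβdef]
    have := mul_nonneg Kβ.coe_nonneg (by linarith : (0:ℝ) ≤ τ - τ₀)
    linarith [abs_nonneg (β τ₀)]
  have hαb : ∀ t ∈ Set.Icc τ₀ τ, |α t| ≤ Mα := by
    intro t ht
    have h1 := hLα.dist_le_mul t ht τ₀ hτ₀mem
    rw [Real.dist_eq, Real.dist_eq] at h1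
    have h2 : |t - τ₀| ≤ τ - τ₀ := by
      rw [abs_of_nonneg (by linarith [ht.1])]
      linarith [ht.2]
    have h3 : (Kα : ℝ) * |t - τ₀| ≤ (Kα : ℝ) * (τ - τ₀) :=
      mul_le_mul_of_nonneg_left h2 (Kα.coe_nonneg)
    have h4 : |α t| ≤ |α t - α τ₀| + |α τ₀| := by
      calc |α t| = |α t - α τ₀ + α τ₀| := by ring_nf
        _ ≤ |α t - α τ₀| + |α τ₀| := abs_add_le _ _
    rw [hMαdef]
    linarith
  have hβb : ∀ t ∈ Set.Icc τ₀ τ, |β t| ≤ Mβ := by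
    intro t ht
    have h1 := hLβ.dist_le_mul t ht τ₀ hτ₀mem
    rw [Real.dist_eq, Real.dist_eq] at h1
    have h2 : |t - τ₀| ≤ τ - τ₀ := by
      rw [abs_of_nonneg (by linarith [ht.1])]
      linarith [ht.2]
    have h3 : (Kβ : ℝ) * |t - τ₀| ≤ (Kβ : ℝ) * (τ - τ₀) :=
      mul_le_mul_of_nonneg_left h2 (Kβ.coe_nonneg)
    have h4 : |β t| ≤ |β t - β τ₀| + |β τ₀| := by
      calc |β t| = |β t - β τ₀ + β τ₀| := by ring_nf
        _ ≤ |β t - β τ₀| + |β τ₀| := abs_add_le _ _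
    rw [hMβdef]
    linarith
  obtain ⟨M, hMdef⟩ : ∃ M : ℝ, M = Mα + Mβ := ⟨_, rfl⟩
  have hM0 : 0 ≤ M := by rw [hMdef]; linarith
  have hμb : ∀ t ∈ Set.Icc τ₀ τ, ∀ x : ℝ, |α t + β t * x| ≤ M * (1 + |x|) := by
    intro t ht x
    have h1 := hαb t ht
    have h2 := hβb t ht
    have h3 : |α t + β t * x| ≤ |α t| + |β t| * |x| := by
      calc |α t + β t * x| ≤ |α t| + |β t * x| := abs_add_le _ _
        _ = |α t| + |β t| * |x| := by rw [abs_mul]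
    have h4 : |β t| * |x| ≤ Mβ * |x| := mul_le_mul_of_nonneg_right h2 (abs_nonneg x)
    have h5 : 0 ≤ |x| := abs_nonneg x
    rw [hMdef]
    nlinarith
  -- bound on the diffusion coefficient
  have hCσ0 : 0 ≤ Cσ := le_trans (abs_nonneg _) (hCσ τ₀ hτ₀mem 0)
  obtain ⟨S, hSdef⟩ : ∃ S : ℝ, S = Cσ^2 := ⟨_, rfl⟩
  have hS0 : 0 ≤ S := by rw [hSdef]; positivity
  have hσ2b : ∀ t ∈ Set.Icc τ₀ τ, ∀ x : ℝ, 0 ≤ (σ t x)^2 ∧ (σ t x)^2 ≤ S := by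
    intro t ht x
    refine ⟨sq_nonneg _, ?_⟩
    rw [hSdef, ← sq_abs]
    exact pow_le_pow_left₀ (abs_nonneg _) (hCσ t ht x) 2
  -- the difference and its properties
  obtain ⟨K, hKdef⟩ : ∃ K : ℝ, K = K₁ + K₂ := ⟨_, rfl⟩
  obtain ⟨k, hkdef⟩ : ∃ k : ℝ, k = max k₁ k₂ := ⟨_, rfl⟩
  have hKpos : 0 < K := by rw [hKdef]; linarith
  have hkpos : 0 < k := by rw [hkdef]; exact lt_max_of_lt_left hk₁
  have hgrowu : ∀ t ∈ Set.Icc τ₀ τ, ∀ x : ℝ,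
      |f₁ t x - f₂ t x| ≤ K * Real.exp (k * |x|) := by
    intro t ht x
    have h1 := hg₁ t ht x
    have h2 := hg₂ t ht x
    have e1 : Real.exp (k₁ * |x|) ≤ Real.exp (k * |x|) := by
      apply Real.exp_le_exp.2
      apply mul_le_mul_of_nonneg_right _ (abs_nonneg x)
      rw [hkdef]; exact le_max_left _ _
    have e2 : Real.exp (k₂ * |x|) ≤ Real.exp (k * |x|) := by
      apply Real.exp_le_exp.2
      apply mul_le_mul_of_nonneg_right _ (abs_nonneg x)
      rw [hkdef]; exact le_max_right _ _
    calc |f₁ t x - f₂ t x| ≤ |f₁ t x| + |f₂ t x| := abs_sub _ _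
      _ ≤ K₁ * Real.exp (k * |x|) + K₂ * Real.exp (k * |x|) := by
          have := mul_le_mul_of_nonneg_left e1 hK₁.le
          have := mul_le_mul_of_nonneg_left e2 hK₂.le
          linarith
      _ = K * Real.exp (k * |x|) := by rw [hKdef]; ring
  obtain ⟨hcu', hdt₁, hdx₁, _⟩ := hC12₁
  obtain ⟨hcu'', hdt₂, hdx₂, _⟩ := hC12₂
  -- the PDE for the difference
  have hpdeu : ∀ t ∈ Set.Ico τ₀ τ, ∀ x : ℝ,
      deriv (fun s => f₁ s x - f₂ s x) t
        + (α t + β t * x) * deriv (fun y => f₁ t y - f₂ t y) x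
        + (1/2) * (σ t x)^2 * deriv (deriv (fun y => f₁ t y - f₂ t y)) x
        - x * (f₁ t x - f₂ t x) = 0 := by
    intro t ht x
    obtain ⟨h1d, h1d1, _⟩ := contdiff2_diff _ (hdx₁ t ht)
    obtain ⟨h2d, h2d1, _⟩ := contdiff2_diff _ (hdx₂ t ht)
    have e1 : deriv (fun s => f₁ s x - f₂ s x) t
        = deriv (fun s => f₁ s x) t - deriv (fun s => f₂ s x) t :=
      deriv_sub (hdt₁ x t ht) (hdt₂ x t ht)
    have e2 : deriv (fun y => f₁ t y - f₂ t y) x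
        = deriv (fun y => f₁ t y) x - deriv (fun y => f₂ t y) x :=
      deriv_sub (h1d x) (h2d x)
    have e3 : deriv (fun y => f₁ t y - f₂ t y)
        = fun y => deriv (fun y' => f₁ t y') y - deriv (fun y' => f₂ t y') y :=
      funext fun y => deriv_sub (h1d y) (h2d y)
    have e4 : deriv (deriv (fun y => f₁ t y - f₂ t y)) x
        = deriv (deriv (fun y => f₁ t y)) x - deriv (deriv (fun y => f₂ t y)) x := by
      rw [e3]
      exact deriv_sub (h1d1 x) (h2d1 x)
    rw [e1, e2, e4]
    have p1 := hpde₁ t ht x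
    have p2 := hpde₂ t ht x
    linarith
  -- differentiability of the difference
  have hcontu : ContinuousOn (fun p : ℝ × ℝ => f₁ p.1 p.2 - f₂ p.1 p.2)
      (Set.Icc τ₀ τ ×ˢ (Set.univ : Set ℝ)) := hcont₁.sub hcont₂
  have hdtu : ∀ x : ℝ, ∀ t ∈ Set.Ico τ₀ τ,
      DifferentiableAt ℝ (fun s => f₁ s x - f₂ s x) t :=
    fun x t ht => (hdt₁ x t ht).sub (hdt₂ x t ht)
  have hdxu : ∀ t ∈ Set.Ico τ₀ τ, ContDiff ℝ 2 (fun x => f₁ t x - f₂ t x) :=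
    fun t ht => (hdx₁ t ht).sub (hdx₂ t ht)
  -- the slice length
  obtain ⟨δ, hδdef⟩ : ∃ δ : ℝ, δ = 1 / (8*M + 10*S + 2) := ⟨_, rfl⟩
  have hκpos : (0:ℝ) < 8*M + 10*S + 2 := by linarith
  have hδpos : 0 < δ := by rw [hδdef]; positivity
  -- the induction
  have key : ∀ n : ℕ, ∀ t ∈ Set.Icc τ₀ τ, τ - n * δ ≤ t → ∀ x : ℝ, f₁ t x - f₂ t x = 0 := by
    intro n
    induction n with
    | zero =>
      intro t ht h x
      have ht' : t = τ := le_antisymm ht.2 (by simpa using h)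
      rw [ht', hterm₁, hterm₂, sub_self]
    | succ n ih =>
      intro t ht hnt x
      by_cases hcase : τ - n * δ ≤ t
      · exact ih t ht hcase x
      · push_neg at hcase
        obtain ⟨b', hb'def⟩ : ∃ b' : ℝ, b' = τ - n * δ := ⟨_, rfl⟩
        have hnδ0 : (0:ℝ) ≤ n * δ := by positivity
        have hb'le : b' ≤ τ := by rw [hb'def]; linarith
        have htb' : t < b' := by rw [hb'def]; exact hcase
        have hb'mem : b' ∈ Set.Icc τ₀ τ := ⟨le_trans ht.1 htb'.le, hb'le⟩
        have hterm' : ∀ x : ℝ, f₁ b' x - f₂ b' x = 0 :=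
          ih b' hb'mem (le_of_eq hb'def.symm) 
        have hsub : Set.Icc t b' ⊆ Set.Icc τ₀ τ :=
          Set.Icc_subset_Icc ht.1 hb'le
        have hsub' : Set.Ico t b' ⊆ Set.Ico τ₀ τ :=
          Set.Ico_subset_Ico ht.1 hb'le
        have hlen : (8*M + 10*S + 2) * (b' - t) ≤ 1 := by
          have h1 : b' - t ≤ δ := by
            rw [hb'def]
            have : ((n+1 : ℕ) : ℝ) * δ = n * δ + δ := by push_cast; ring
            rw [this] at hnt
            linarith
          calc (8*M + 10*S + 2) * (b' - t) ≤ (8*M + 10*S + 2) * δ :=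
                mul_le_mul_of_nonneg_left h1 hκpos.le
            _ = 1 := by rw [hδdef]; field_simp
        have := slice_zero t b' htb'
          (fun t x => α t + β t * x) (fun t x => (σ t x)^2) M S hM0 hS0
          (fun s hs x => hμb s (hsub hs) x)
          (fun s hs x => hσ2b s (hsub hs) x)
          hlen
          (fun s y => f₁ s y - f₂ s y)
          (hcontu.mono (Set.prod_mono_left hsub))
          (fun x s hs => hdtu x s (hsub' hs))
          (fun s hs => hdxu s (hsub' hs))
          (fun s hs x => hpdeu s (hsub' hs) x)
          hterm'
          K k hKpos hkpos
          (fun s hs x => hgrowu s (hsub hs) x)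
        exact this t ⟨le_rfl, htb'.le⟩ x
  intro t ht x
  obtain ⟨n, hn⟩ := exists_nat_gt ((τ - τ₀) / δ)
  have hn' : τ - n * δ ≤ t := by
    have h1 : (τ - τ₀) / δ * δ < n * δ := by
      apply mul_lt_mul_of_pos_right hn hδpos
    rw [div_mul_cancel₀ _ hδpos.ne'] at h1
    linarith [ht.1]
  have := key n t ht hn' x
  linarith
end

section
/- Let τ₀ < τ be real numbers, let α, β : [τ₀, τ] → ℝ and σ : [τ₀, τ] × ℝ → ℝ be functions, and let c : [τ₀, τ] → ℝ be differentiable with c′(t) + β(t)·c(t) + 1 = 0 for all t. Let f be of class C^{1,2} on (τ₀, τ) × ℝ and define v(t,x) := f(t,x)·exp(c(t)·x). Then at every point (t,x) ∈ (τ₀, τ) × ℝ, f satisfies ∂ₜf + (α(t) + β(t)x)·∂ₓf + (1/2)·σ(t,x)²·∂²ₓₓf − x·f = 0 if and only if v satisfies ∂ₜv + (1/2)·σ(t,x)²·∂²ₓₓv + (α(t) + β(t)x − c(t)·σ(t,x)²)·∂ₓv − (c(t)·α(t) − c(t)²·σ(t,x)²/2)·v = 0. -/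
/-- The exponential change of unknown `v(t,x) = f(t,x)·e^{c(t)x}`, with `c` solving the
linear ODE `c′ + βc + 1 = 0`, transforms the pricing PDE with unbounded potential term `x`
into a parabolic PDE with zero-order coefficient `c(t)α(t) − c(t)²σ(t,x)²/2`. -/
theorem exponential_change_of_unknown
    (τ₀ τ : ℝ) (hττ : τ₀ < τ)
    (α β : ℝ → ℝ) (σ : ℝ → ℝ → ℝ)
    (c : ℝ → ℝ)
    (hcdiff : ∀ t ∈ Set.Icc τ₀ τ, DifferentiableAt ℝ c t)
    (hode : ∀ t ∈ Set.Icc τ₀ τ, deriv c t + β t * c t + 1 = 0)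
    (f : ℝ → ℝ → ℝ) (hf : C12On f (Set.Ioo τ₀ τ))
    (v : ℝ → ℝ → ℝ) (hv : ∀ t x : ℝ, v t x = f t x * Real.exp (c t * x)) :
    ∀ t ∈ Set.Ioo τ₀ τ, ∀ x : ℝ,
      (deriv (fun s => f s x) t + (α t + β t * x) * deriv (fun y => f t y) x
          + (1 / 2) * (σ t x) ^ 2 * deriv (deriv (fun y => f t y)) x - x * f t x = 0)
      ↔
      (deriv (fun s => v s x) t + (1 / 2) * (σ t x) ^ 2 * deriv (deriv (fun y => v t y)) x
          + (α t + β t * x - c t * (σ t x) ^ 2) * deriv (fun y => v t y) x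
          - (c t * α t - c t ^ 2 * (σ t x) ^ 2 / 2) * v t x = 0) := by
  intro t ht x
  have ht2 : t ∈ Set.Icc τ₀ τ := Set.Ioo_subset_Icc_self ht
  have hcd := hcdiff t ht2
  have hc' : deriv c t = -(β t * c t) - 1 := by have := hode t ht2; linarith
  -- smoothness in space
  have hg2 : ContDiff ℝ 2 (fun y => f t y) := hf.2.2.1 t ht
  have hgdiff : Differentiable ℝ (fun y => f t y) :=
    hg2.differentiable (by norm_num)
  have hg2' : ContDiff ℝ (1 + 1 : ℕ) (fun y => f t y) := by
    exact_mod_cast hg2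
  have hg'1 : ContDiff ℝ 1 (deriv (fun y => f t y)) := by
    have := (contDiff_succ_iff_deriv.mp (by exact_mod_cast hg2 :
      ContDiff ℝ ((1 : ℕ∞) + 1) (fun y => f t y))).2.2
    exact this
  have hg'diff : Differentiable ℝ (deriv (fun y => f t y)) :=
    hg'1.differentiable (by norm_num)
  -- time derivative of v
  have hfunt : (fun s => v s x) = fun s => f s x * Real.exp (c s * x) :=
    funext fun s => hv s x
  have hft : HasDerivAt (fun s => f s x) (deriv (fun s => f s x) t) t :=
    (hf.2.1 x t ht).hasDerivAt
  have hcE : HasDerivAt (fun s => Real.exp (c s * x))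
      (Real.exp (c t * x) * (deriv c t * x)) t := by
    have := (hcd.hasDerivAt.mul_const x).exp
    simpa using this
  have hvt : deriv (fun s => v s x) t
      = deriv (fun s => f s x) t * Real.exp (c t * x)
        + f t x * (Real.exp (c t * x) * (deriv c t * x)) := by
    rw [hfunt]
    exact (hft.mul hcE).deriv
  -- spatial derivative of v (as a function)
  have hEy : ∀ y : ℝ, HasDerivAt (fun z => Real.exp (c t * z))
      (Real.exp (c t * y) * c t) y := by
    intro y
    have h1 : HasDerivAt (fun z : ℝ => c t * z) (c t) y := by
      simpa using (hasDerivAt_id y).const_mul (c t)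
    simpa using h1.exp
  have hVder : deriv (fun y => v t y)
      = fun y => deriv (fun y => f t y) y * Real.exp (c t * y)
          + f t y * (Real.exp (c t * y) * c t) := by
    funext y
    have h := ((hgdiff y).hasDerivAt.mul (hEy y))
    have hfun : (fun y => v t y) = fun y => f t y * Real.exp (c t * y) :=
      funext fun y => hv t y
    rw [hfun]
    exact h.deriv
  have hvx : deriv (fun y => v t y) x
      = deriv (fun y => f t y) x * Real.exp (c t * x)
        + f t x * (Real.exp (c t * x) * c t) := by rw [hVder]
  -- second spatial derivative
  have hvxx : deriv (deriv (fun y => v t y)) x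
      = (deriv (deriv (fun y => f t y)) x * Real.exp (c t * x)
          + deriv (fun y => f t y) x * (Real.exp (c t * x) * c t))
        + (deriv (fun y => f t y) x * (Real.exp (c t * x) * c t)
          + f t x * (Real.exp (c t * x) * c t * c t)) := by
    rw [hVder]
    have h1 : HasDerivAt (fun y => deriv (fun y => f t y) y * Real.exp (c t * y))
        (deriv (deriv (fun y => f t y)) x * Real.exp (c t * x)
          + deriv (fun y => f t y) x * (Real.exp (c t * x) * c t)) x :=
      (hg'diff x).hasDerivAt.mul (hEy x)
    have h2 : HasDerivAt (fun y => f t y * (Real.exp (c t * y) * c t))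
        (deriv (fun y => f t y) x * (Real.exp (c t * x) * c t)
          + f t x * (Real.exp (c t * x) * c t * c t)) x := by
      have := (hgdiff x).hasDerivAt.mul ((hEy x).mul_const (c t))
      exact this.congr_deriv (by ring)
    exact (h1.add h2).deriv
  -- put it together
  rw [hvt, hvx, hvxx, hv t x, hc']
  have hE : Real.exp (c t * x) ≠ 0 := Real.exp_ne_zero _
  constructor
  · intro h
    have : deriv (fun s => f s x) t = -((α t + β t * x) * deriv (fun y => f t y) x
        + (1 / 2) * (σ t x) ^ 2 * deriv (deriv (fun y => f t y)) x - x * f t x) := by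
      linarith
    rw [this]; ring
  · intro h
    have key : Real.exp (c t * x) *
        (deriv (fun s => f s x) t + (α t + β t * x) * deriv (fun y => f t y) x
          + (1 / 2) * (σ t x) ^ 2 * deriv (deriv (fun y => f t y)) x - x * f t x) = 0 := by
      rw [← h]; ring
    rcases mul_eq_zero.mp key with h' | h'
    · exact absurd h' hE
    · exact h'
end

section
/- Let 0 = t₀ < t₁ < ⋯ < t_N < t_{N+1} = T and 0 < s₁ < ⋯ < s_M < T with no s_j equal to any t_n. Let α, β, γ, δ : [0,T] → ℝ be continuous, and for each n = 0,…,N let b_n : [t_n, t_{n+1}] → ℝ be differentiable with b_n′(t) + β(t)·b_n(t) − (1/2)·δ(t)·b_n(t)² + 1 = 0 on [t_n, t_{n+1}], subject to b_N(T) = 0 and b_n(t_{n+1}) = b_{n+1}(t_{n+1}) + 1 for n = 0,…,N−1. Define b(t) := b_n(t) for t ∈ [t_n, t_{n+1}), and b(T) := 0. Let Q₁,…,Q_M be Borel probability measures on ℝ with 0 < ∫_ℝ e^{−z·b(s_j)} Q_j(dz) < ∞ for each j, and define a(t) := ∫ₜ^T (α(u)·b(u) − (1/2)·γ(u)·b(u)²)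 du − Σ_{j=1}^M 1_{[0,s_j)}(t)·log ∫_ℝ e^{−z·b(s_j)} Q_j(dz). Then P(t,x) := exp(−a(t) − x·b(t)) satisfies: (i) ∂ₜP + (α(t) + β(t)x)·∂ₓP + (1/2)·(γ(t) + δ(t)x)·∂²ₓₓP = x·P at every (t,x) ∈ [0,T) × ℝ with t not equal to any t_n or s_j; (ii) P(T,x) = 1 for all x ∈ ℝ; (iii) lim_{t↑t_n} P(t,x) = e^{−x}·P(t_n, x) for each n = 1,…,N and all x ∈ ℝ; (iv) lim_{t↑s_j} P(t,x) = ∫_ℝ P(s_j, x+z) Q_j(dz) for each j = 1,…,M and all x ∈ ℝ. -/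
open MeasureTheory

/-- The exponential-affine function `P(t,x) = exp(−a(t) − x·b(t))`, with `b` pieced
together from solutions of the Riccati equation with jump conditions at the roll-over
dates `t_n` and `a` containing the log-Laplace corrections of the short-rate jumps at
the dates `s_j`, is the zero-coupon bond price in the affine short-rate model with
stochastic discontinuities: it solves the affine pricing PDE between relevant dates,
equals `1` at maturity, and satisfies the no-arbitrage boundary conditions
`P(t_n⁻,x) = e^{−x}P(t_n,x)` and `P(s_j⁻,x) = ∫ P(s_j, x+z) Q_j(dz)`. -/
theorem zcb_price_affine_with_stochastic_discontinuities
    (T : ℝ) (N M : ℕ) (tt ss : ℕ → ℝ)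
    (htt0 : tt 0 = 0) (httT : tt (N + 1) = T)
    (htt_mono : ∀ n ≤ N, tt n < tt (n + 1))
    (hss_pos : ∀ j ∈ Finset.Icc 1 M, 0 < ss j)
    (hss_lt : ∀ j ∈ Finset.Icc 1 M, ss j < T)
    (hss_mono : ∀ j, 1 ≤ j → j + 1 ≤ M → ss j < ss (j + 1))
    (hdistinct : ∀ j ∈ Finset.Icc 1 M, ∀ n ≤ N + 1, ss j ≠ tt n)
    (α β γ δ : ℝ → ℝ)
    (hα : ContinuousOn α (Set.Icc 0 T)) (hβ : ContinuousOn β (Set.Icc 0 T))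
    (hγ : ContinuousOn γ (Set.Icc 0 T)) (hδ : ContinuousOn δ (Set.Icc 0 T))
    (bfun : ℕ → ℝ → ℝ)
    (hbode : ∀ n ≤ N, ∀ u ∈ Set.Icc (tt n) (tt (n + 1)),
      HasDerivAt (bfun n)
        (-(β u * bfun n u) + (1 / 2) * δ u * (bfun n u) ^ 2 - 1) u)
    (hbT : bfun N T = 0)
    (hbjump : ∀ n < N, bfun n (tt (n + 1)) = bfun (n + 1) (tt (n + 1)) + 1)
    (b : ℝ → ℝ)
    (hb : ∀ u : ℝ, b u =
      ∑ n ∈ Finset.range (N + 1),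
        (Set.Ico (tt n) (tt (n + 1))).indicator (bfun n) u)
    (Q : ℕ → Measure ℝ)
    (hQprob : ∀ j ∈ Finset.Icc 1 M, IsProbabilityMeasure (Q j))
    (hQint : ∀ j ∈ Finset.Icc 1 M,
      Integrable (fun z => Real.exp (-(z * b (ss j)))) (Q j))
    (hQpos : ∀ j ∈ Finset.Icc 1 M,
      0 < ∫ z, Real.exp (-(z * b (ss j))) ∂(Q j))
    (a : ℝ → ℝ)
    (ha : ∀ t : ℝ, a t =
      (∫ u in t..T, (α u * b u - (1 / 2) * γ u * (b u) ^ 2)) -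
        ∑ j ∈ Finset.Icc 1 M,
          (Set.Ico (0 : ℝ) (ss j)).indicator
            (fun _ => Real.log (∫ z, Real.exp (-(z * b (ss j))) ∂(Q j))) t)
    (P : ℝ → ℝ → ℝ)
    (hP : ∀ t x : ℝ, P t x = Real.exp (-(a t) - x * b t)) :
    (∀ t ∈ Set.Ico (0 : ℝ) T, (∀ n ≤ N + 1, t ≠ tt n) →
      (∀ j ∈ Finset.Icc 1 M, t ≠ ss j) → ∀ x : ℝ,
        deriv (fun s => P s x) t + (α t + β t * x) * deriv (fun y => P t y) x
          + (1 / 2) * (γ t + δ t * x) * deriv (deriv (fun y => P t y)) x = x * P t x) ∧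
    (∀ x : ℝ, P T x = 1) ∧
    (∀ n, 1 ≤ n → n ≤ N → ∀ x : ℝ,
      Filter.Tendsto (fun t => P t x) (nhdsWithin (tt n) (Set.Iio (tt n)))
        (nhds (Real.exp (-x) * P (tt n) x))) ∧
    (∀ j ∈ Finset.Icc 1 M, ∀ x : ℝ,
      Filter.Tendsto (fun t => P t x) (nhdsWithin (ss j) (Set.Iio (ss j)))
        (nhds (∫ z, P (ss j) (x + z) ∂(Q j)))) := by
  -- strict monotonicity of tt
  have hlt : ∀ n ≤ N + 1, ∀ m < n, tt m < tt n := by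
    intro n
    induction n with
    | zero => intro _ m hm; omega
    | succ k ih =>
      intro hk m hm
      have hk' : k ≤ N := by omega
      rcases Nat.lt_succ_iff_lt_or_eq.mp hm with h | h
      · exact (ih (by omega) m h).trans (htt_mono k hk')
      · subst h; exact htt_mono m hk'
  have hle : ∀ m n, m ≤ n → n ≤ N + 1 → tt m ≤ tt n := by
    intro m n h hn
    rcases h.lt_or_eq with h' | h'
    · exact (hlt n hn m h').le
    · rw [h']
  have hT0 : (0:ℝ) < T := by
    rw [← htt0, ← httT]; exact hlt (N+1) le_rfl 0 (by omega)
  have htt_nonneg : ∀ n ≤ N + 1, 0 ≤ tt n := by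
    intro n hn; rw [← htt0]; exact hle 0 n (by omega) hn
  have htt_leT : ∀ n ≤ N + 1, tt n ≤ T := by
    intro n hn; rw [← httT]; exact hle n (N+1) hn le_rfl
  -- b on the pieces
  have hbIco : ∀ n ≤ N, ∀ u ∈ Set.Ico (tt n) (tt (n+1)), b u = bfun n u := by
    intro n hn u hu
    rw [hb, Finset.sum_eq_single n]
    · exact Set.indicator_of_mem hu _
    · intro m hm hmn
      apply Set.indicator_of_notMem
      intro hum
      rcases lt_or_gt_of_ne hmn with h | h
      · have h1 : tt (m+1) ≤ tt n := hle (m+1) n h (by omega)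
        exact absurd (hum.2.trans_le (h1.trans hu.1)) (lt_irrefl u)
      · have h1 : tt (n+1) ≤ tt m := hle (n+1) m h (by have := Finset.mem_range.mp hm; omega)
        exact absurd (hu.2.trans_le (h1.trans hum.1)) (lt_irrefl u)
    · intro hn'; exact absurd (Finset.mem_range.mpr (by omega)) hn'
  have hbT0 : b T = 0 := by
    rw [hb]
    apply Finset.sum_eq_zero
    intro n hn
    apply Set.indicator_of_notMem
    intro hT
    have : tt (n+1) ≤ T := htt_leT (n+1) (by have := Finset.mem_range.mp hn; omega)
    exact absurd hT.2 (not_lt.2 this)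
  -- location lemmas
  have hmemIco : ∀ u, 0 ≤ u → u < T → ∃ n, n ≤ N ∧ tt n ≤ u ∧ u < tt (n+1) := by
    intro u hu0 huT
    set F := (Finset.range (N+1)).filter (fun n => tt n ≤ u) with hF
    have h0 : (0:ℕ) ∈ F := by
      exact Finset.mem_filter.mpr ⟨Finset.mem_range.mpr (by omega), by rw [htt0]; exact hu0⟩
    have hne : F.Nonempty := ⟨0, h0⟩
    have hmax := Finset.mem_filter.mp (F.max'_mem hne)
    have hmaxr := Finset.mem_range.mp hmax.1
    refine ⟨F.max' hne, by omega, hmax.2, ?_⟩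
    by_contra hcon
    push_neg at hcon
    have hmem : F.max' hne + 1 ∈ F := by
      have hsmall : F.max' hne + 1 ≤ N := by
        rcases Nat.lt_or_ge (F.max' hne + 1) (N+1) with h | h
        · omega
        · exfalso
          have heq : F.max' hne = N := by omega
          have : tt (N+1) ≤ u := by rw [← heq]; exact hcon
          rw [httT] at this; exact absurd huT (not_lt.2 this)
      exact Finset.mem_filter.mpr ⟨Finset.mem_range.mpr (by omega), hcon⟩
    have := F.le_max' _ hmem
    omega
  have hmemIoc : ∀ u, 0 < u → u ≤ T → ∃ n, n ≤ N ∧ tt n < u ∧ u ≤ tt (n+1) := by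
    intro u hu0 huT
    set F := (Finset.range (N+1)).filter (fun n => tt n < u) with hF
    have h0 : (0:ℕ) ∈ F := by
      exact Finset.mem_filter.mpr ⟨Finset.mem_range.mpr (by omega), by rw [htt0]; exact hu0⟩
    have hne : F.Nonempty := ⟨0, h0⟩
    have hmax := Finset.mem_filter.mp (F.max'_mem hne)
    have hmaxr := Finset.mem_range.mp hmax.1
    refine ⟨F.max' hne, by omega, hmax.2, ?_⟩
    by_contra hcon
    push_neg at hcon
    have hmem : F.max' hne + 1 ∈ F := by
      have hsmall : F.max' hne + 1 ≤ N := by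
        rcases Nat.lt_or_ge (F.max' hne + 1) (N+1) with h | h
        · omega
        · exfalso
          have heq : F.max' hne = N := by omega
          have : tt (N+1) < u := by rw [← heq]; exact hcon
          rw [httT] at this; exact absurd huT (not_le.2 this)
      exact Finset.mem_filter.mpr ⟨Finset.mem_range.mpr (by omega), hcon⟩
    have := F.le_max' _ hmem
    omega
  -- b locally equals bfun n
  have hbloc : ∀ n, n ≤ N → ∀ t ∈ Set.Ioo (tt n) (tt (n+1)), b =ᶠ[nhds t] bfun n := by
    intro n hn t ht
    filter_upwards [Ioo_mem_nhds ht.1 ht.2] with u hu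
    exact hbIco n hn u ⟨hu.1.le, hu.2⟩
  -- names
  set f : ℝ → ℝ := fun u => α u * b u - 1 / 2 * γ u * b u ^ 2 with hfdef
  set S : ℝ → ℝ := fun t => ∑ j ∈ Finset.Icc 1 M,
      (Set.Ico (0 : ℝ) (ss j)).indicator
        (fun _ => Real.log (∫ z, Real.exp (-(z * b (ss j))) ∂(Q j))) t with hSdef
  have ha' : ∀ t, a t = (∫ u in t..T, f u) - S t := fun t => ha t
  -- integrability
  have hIccsub : ∀ n ≤ N, Set.Icc (tt n) (tt (n+1)) ⊆ Set.Icc 0 T := by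
    intro n hn u hu
    exact ⟨le_trans (htt_nonneg n (by omega)) hu.1, le_trans hu.2 (htt_leT (n+1) (by omega))⟩
  have hIntIoc : IntegrableOn f (Set.Ioc 0 T) := by
    have hIntPiece : ∀ n ≤ N, IntegrableOn f (Set.Ioc (tt n) (tt (n+1))) := by
      intro n hn
      have hbc : ContinuousOn (bfun n) (Set.Icc (tt n) (tt (n+1))) := fun u hu =>
        ((hbode n hn u hu).continuousAt).continuousWithinAt
      have hg : ContinuousOn (fun u => α u * bfun n u - 1 / 2 * γ u * bfun n u ^ 2)
          (Set.Icc (tt n) (tt (n+1))) :=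
        ((hα.mono (hIccsub n hn)).mul hbc).sub
          ((continuousOn_const.mul (hγ.mono (hIccsub n hn))).mul (hbc.pow 2))
      have hgint : IntegrableOn (fun u => α u * bfun n u - 1 / 2 * γ u * bfun n u ^ 2)
          (Set.Ioc (tt n) (tt (n+1))) :=
        (hg.integrableOn_Icc).mono_set Set.Ioc_subset_Icc_self
      apply hgint.congr
      have h1 : ∀ᵐ u ∂(volume.restrict (Set.Ioc (tt n) (tt (n+1)))),
          u ∈ Set.Ioc (tt n) (tt (n+1)) := ae_restrict_mem measurableSet_Ioc
      have h2 : ∀ᵐ u ∂(volume.restrict (Set.Ioc (tt n) (tt (n+1)))), u ≠ tt (n+1) := by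
        refine ae_restrict_of_ae ?_
        refine (MeasureTheory.ae_iff).mpr ?_
        simpa using Real.volume_singleton
      filter_upwards [h1, h2] with u hu1 hu2
      have : b u = bfun n u := hbIco n hn u ⟨hu1.1.le, lt_of_le_of_ne hu1.2 hu2⟩
      simp only [hfdef, this]
    have hsub : Set.Ioc (0:ℝ) T ⊆ ⋃ n ∈ Finset.range (N+1), Set.Ioc (tt n) (tt (n+1)) := by
      intro u hu
      obtain ⟨n, hn, h1, h2⟩ := hmemIoc u hu.1 hu.2
      exact Set.mem_biUnion (Finset.mem_range.mpr (by omega)) ⟨h1, h2⟩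
    have hU : IntegrableOn f (⋃ n ∈ Finset.range (N+1), Set.Ioc (tt n) (tt (n+1))) :=
      (integrableOn_finset_iUnion).mpr
        (fun n hn => hIntPiece n (by have := Finset.mem_range.mp hn; omega))
    exact hU.mono_set hsub
  have hII : ∀ c, 0 ≤ c → c ≤ T → IntervalIntegrable f volume c T := by
    intro c h0 hcT
    rw [intervalIntegrable_iff]
    apply hIntIoc.mono_set
    rw [Set.uIoc_of_le hcT]
    exact Set.Ioc_subset_Ioc_left h0
  -- continuity of the primitive from the left
  have hIten : ∀ p, 0 < p → p ≤ T →
      Filter.Tendsto (fun t => ∫ u in t..T, f u) (nhdsWithin p (Set.Iio p))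
        (nhds (∫ u in p..T, f u)) := by
    intro p hp0 hpT
    have hint : IntervalIntegrable f volume (min T 0) (max T T) := by
      rw [min_comm, min_eq_left hT0.le, max_self]
      exact hII 0 le_rfl hT0.le
    have hcw : ContinuousWithinAt (fun t => ∫ u in T..t, f u) (Set.Icc 0 T) p :=
      intervalIntegral.continuousWithinAt_primitive (measure_singleton p) hint
    have hcw2 : ContinuousWithinAt (fun t => ∫ u in t..T, f u) (Set.Icc 0 T) p := by
      have : (fun t => ∫ u in t..T, f u) = fun t => -∫ u in T..t, f u := by
        funext t; rw [intervalIntegral.integral_symm]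
      rw [this]
      exact hcw.neg
    have hmemfilter : Set.Icc 0 T ∈ nhdsWithin p (Set.Iio p) :=
      Filter.mem_of_superset
        (Filter.inter_mem (mem_nhdsWithin_of_mem_nhds (Ioi_mem_nhds hp0)) self_mem_nhdsWithin)
        (fun t ht => ⟨ht.1.le, le_trans ht.2.le hpT⟩)
    exact hcw2.tendsto.mono_left (nhdsWithin_le_of_mem hmemfilter)
  -- ss strict monotonicity
  have hss_strict : ∀ l ≤ M, ∀ k, 1 ≤ k → k < l → ss k < ss l := by
    intro l
    induction l with
    | zero => intro _ k _ hk; omega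
    | succ m ih =>
      intro hl k hk1 hkm
      rcases Nat.lt_succ_iff_lt_or_eq.mp hkm with h | h
      · exact (ih (by omega) k hk1 h).trans (hss_mono m (by omega) hl)
      · subst h; exact hss_mono k hk1 hl
  have hss_ne : ∀ j ∈ Finset.Icc 1 M, ∀ k ∈ Finset.Icc 1 M, j ≠ k → ss j ≠ ss k := by
    intro j hj k hk hjk
    rw [Finset.mem_Icc] at hj hk
    rcases lt_or_gt_of_ne hjk with h | h
    · exact ne_of_lt (hss_strict k hk.2 j hj.1 h)
    · exact (ne_of_lt (hss_strict j hj.2 k hk.1 h)).symm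
  -- local constancy of indicators
  have hind : ∀ (c r p : ℝ), p ≠ 0 → p ≠ r →
      ∀ᶠ t in nhds p, (Set.Ico (0:ℝ) r).indicator (fun _ => c) t
        = (Set.Ico (0:ℝ) r).indicator (fun _ => c) p := by
    intro c r p hp0 hpr
    by_cases hp : p ∈ Set.Ico (0:ℝ) r
    · have hp' : p ∈ Set.Ioo (0:ℝ) r := ⟨lt_of_le_of_ne hp.1 (Ne.symm hp0), hp.2⟩
      filter_upwards [Ioo_mem_nhds hp'.1 hp'.2] with t ht
      have htm : t ∈ Set.Ico (0:ℝ) r := ⟨le_of_lt ht.1, ht.2⟩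
      rw [Set.indicator_of_mem htm, Set.indicator_of_mem hp]
    · have hp' : p ∉ Set.Icc (0:ℝ) r := by
        intro h; exact hp ⟨h.1, lt_of_le_of_ne h.2 hpr⟩
      have hop : IsOpen (Set.Icc (0:ℝ) r)ᶜ := isOpen_compl_iff.2 isClosed_Icc
      filter_upwards [hop.mem_nhds hp'] with t ht
      have htm : t ∉ Set.Ico (0:ℝ) r := fun h => ht ⟨h.1, le_of_lt h.2⟩
      rw [Set.indicator_of_notMem htm, Set.indicator_of_notMem hp]
  -- local constancy of S away from 0 and the ss j
  have hSev : ∀ p : ℝ, p ≠ 0 → (∀ j ∈ Finset.Icc 1 M, p ≠ ss j) →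
      S =ᶠ[nhds p] fun _ => S p := by
    intro p hp0 hps
    have H : ∀ᶠ t in nhds p, ∀ j ∈ Finset.Icc 1 M,
        (Set.Ico (0:ℝ) (ss j)).indicator
          (fun _ => Real.log (∫ z, Real.exp (-(z * b (ss j))) ∂(Q j))) t
        = (Set.Ico (0:ℝ) (ss j)).indicator
          (fun _ => Real.log (∫ z, Real.exp (-(z * b (ss j))) ∂(Q j))) p :=
      (Filter.eventually_all_finset _).mpr (fun j hj => hind _ (ss j) p hp0 (hps j hj))
    filter_upwards [H] with t ht
    exact Finset.sum_congr rfl fun j hj => ht j hj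
  refine ⟨?_, ?_, ?_, ?_⟩
  · -- the PDE
    intro t ht htn hts x
    obtain ⟨n, hn, h1, h2⟩ := hmemIco t ht.1 ht.2
    have h1' : tt n < t := lt_of_le_of_ne h1 (Ne.symm (htn n (by omega)))
    have h0t : 0 < t := lt_of_le_of_lt (htt_nonneg n (by omega)) h1'
    have hbev : b =ᶠ[nhds t] bfun n := hbloc n hn t ⟨h1', h2⟩
    have hbt : b t = bfun n t := hbIco n hn t ⟨h1, h2⟩
    have hDb : HasDerivAt b (-(β t * b t) + 1 / 2 * δ t * b t ^ 2 - 1) t := by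
      have := hbode n hn t ⟨h1, h2.le⟩
      rw [← hbt] at this
      exact this.congr_of_eventuallyEq hbev
    have hIccnhds : Set.Icc (0:ℝ) T ∈ nhds t := Icc_mem_nhds h0t ht.2
    have hαt : ContinuousAt α t := hα.continuousAt hIccnhds
    have hγt : ContinuousAt γ t := hγ.continuousAt hIccnhds
    have hbct : ContinuousAt b t := hDb.continuousAt
    have hfc : ContinuousAt f t :=
      ((hαt.mul hbct).sub ((continuousAt_const.mul hγt).mul (hbct.pow 2)))
    have hmeasf : StronglyMeasurableAtFilter f (nhds t) volume := by
      rw [StronglyMeasurableAtFilter]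
      refine ⟨Set.Ioo (tt n) (tt (n+1)), Ioo_mem_nhds h1' h2, ?_⟩
      have hsub : Set.Ioo (tt n) (tt (n+1)) ⊆ Set.Ioc 0 T := fun u hu =>
        ⟨lt_of_le_of_lt (htt_nonneg n (by omega)) hu.1,
         le_trans hu.2.le (htt_leT (n+1) (by omega))⟩
      exact (hIntIoc.mono_set hsub).aestronglyMeasurable
    have hDI : HasDerivAt (fun s => ∫ u in s..T, f u) (-(f t)) t :=
      intervalIntegral.integral_hasDerivAt_left (hII t h0t.le ht.2.le) hmeasf hfc
    have hDS : HasDerivAt S 0 t :=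
      (hasDerivAt_const t (S t)).congr_of_eventuallyEq
        (hSev t (ne_of_gt h0t) hts)
    have hDa : HasDerivAt a (-(f t)) t := by
      have h := hDI.sub hDS
      rw [sub_zero] at h
      exact h.congr_of_eventuallyEq (Filter.Eventually.of_forall ha')
    -- spatial derivatives
    have hx1 : ∀ y : ℝ, HasDerivAt (fun y => Real.exp (-(a t) - y * b t))
        (Real.exp (-(a t) - y * b t) * (-(b t))) y := fun y =>
      (((hasDerivAt_mul_const (b t)).const_sub (-(a t))).exp)
    have hderiv1 : deriv (fun y => Real.exp (-(a t) - y * b t))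
        = fun y => -(b t) * Real.exp (-(a t) - y * b t) := by
      funext y; rw [(hx1 y).deriv]; ring
    have hx2 : HasDerivAt (fun y => -(b t) * Real.exp (-(a t) - y * b t))
        (-(b t) * (Real.exp (-(a t) - x * b t) * (-(b t)))) x := (hx1 x).const_mul (-(b t))
    have hDt : HasDerivAt (fun s => Real.exp (-(a s) - x * b s))
        (Real.exp (-(a t) - x * b t) *
          (-(-(f t)) - x * (-(β t * b t) + 1 / 2 * δ t * b t ^ 2 - 1))) t :=
      ((hDa.neg).sub (hDb.const_mul x)).exp
    simp only [hP]
    simp only [hderiv1, hx2.deriv, hDt.deriv, hfdef]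
    ring
  · -- terminal condition
    intro x
    have haT : a T = 0 := by
      rw [ha' T, intervalIntegral.integral_same]
      have : S T = 0 := by
        rw [hSdef]
        apply Finset.sum_eq_zero
        intro j hj
        apply Set.indicator_of_notMem
        intro hT
        exact absurd (hT.2) (not_lt.2 (hss_lt j hj).le)
      rw [this]; ring
    rw [hP, haT, hbT0]
    simp
  · -- roll-over boundary condition
    intro n hn1 hnN x
    obtain ⟨m, rfl⟩ : ∃ m, n = m + 1 := ⟨n - 1, by omega⟩
    set p := tt (m+1) with hpdef
    have hp0 : 0 < p := by rw [hpdef, ← htt0]; exact hlt (m+1) (by omega) 0 (by omega)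
    have hpT : p ≤ T := htt_leT (m+1) (by omega)
    have hbl : Filter.Tendsto b (nhdsWithin p (Set.Iio p)) (nhds (b p + 1)) := by
      have hev : b =ᶠ[nhdsWithin p (Set.Iio p)] bfun m := by
        filter_upwards [self_mem_nhdsWithin,
          mem_nhdsWithin_of_mem_nhds (Ioi_mem_nhds (htt_mono m (by omega)))] with u hu1 hu2
        exact hbIco m (by omega) u ⟨le_of_lt hu2, hu1⟩
      have htendb : Filter.Tendsto (bfun m) (nhdsWithin p (Set.Iio p))
          (nhds (bfun m p)) :=
        ((hbode m (by omega) p ⟨(htt_mono m (by omega)).le, le_rfl⟩).continuousAt).continuousWithinAt.tendsto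
      have hval : bfun m p = b p + 1 := by
        have hj := hbjump m (by omega)
        have hbp : b p = bfun (m+1) p :=
          hbIco (m+1) hnN p ⟨le_rfl, htt_mono (m+1) hnN⟩
        rw [hpdef] at hbp ⊢
        rw [hj, hbp]
      rw [← hval]
      exact htendb.congr' hev.symm
    have hSt : Filter.Tendsto S (nhdsWithin p (Set.Iio p)) (nhds (S p)) := by
      have := (hSev p (ne_of_gt hp0)
        (fun j hj => (hdistinct j hj (m+1) (by omega)).symm)).filter_mono
        (nhdsWithin_le_nhds (s := Set.Iio p))
      exact Filter.Tendsto.congr' this.symm tendsto_const_nhds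
    have haT : Filter.Tendsto a (nhdsWithin p (Set.Iio p)) (nhds (a p)) := by
      rw [ha' p]
      exact Filter.Tendsto.congr' (Filter.Eventually.of_forall fun s => (ha' s).symm)
        ((hIten p hp0 hpT).sub hSt)
    have hval : Real.exp (-x) * P p x = Real.exp (-(a p) - x * (b p + 1)) := by
      rw [hP, ← Real.exp_add]; congr 1; ring
    rw [hval]
    simp only [hP]
    exact (Real.continuous_exp.tendsto _).comp ((haT.neg).sub (hbl.const_mul x))
  · -- jump-date boundary condition
    intro j hj x
    set p := ss j with hpdef
    have hp0 : 0 < p := hss_pos j hj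
    have hpT : p < T := hss_lt j hj
    -- b is continuous at p
    obtain ⟨n, hn, h1, h2⟩ := hmemIco p hp0.le hpT
    have hbct : ContinuousAt b p := by
      have := hbloc n hn p ⟨lt_of_le_of_ne h1 (fun h => (hdistinct j hj n (by omega)) h.symm), h2⟩
      exact ((hbode n hn p ⟨h1, h2.le⟩).continuousAt).congr this.symm
    have hbl : Filter.Tendsto b (nhdsWithin p (Set.Iio p)) (nhds (b p)) :=
      hbct.continuousWithinAt.tendsto
    -- limit of S from the left
    have hSt : Filter.Tendsto S (nhdsWithin p (Set.Iio p))
        (nhds (S p + Real.log (∫ z, Real.exp (-(z * b p)) ∂(Q j)))) := by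
      have hj_ev : ∀ᶠ t in nhdsWithin p (Set.Iio p), t ∈ Set.Ico (0:ℝ) p := by
        filter_upwards [self_mem_nhdsWithin,
          mem_nhdsWithin_of_mem_nhds (Ioi_mem_nhds hp0)] with t h1 h2
        exact ⟨le_of_lt h2, h1⟩
      have H : ∀ᶠ t in nhds p, ∀ k ∈ (Finset.Icc 1 M).erase j,
          (Set.Ico (0:ℝ) (ss k)).indicator
            (fun _ => Real.log (∫ z, Real.exp (-(z * b (ss k))) ∂(Q k))) t
          = (Set.Ico (0:ℝ) (ss k)).indicator
            (fun _ => Real.log (∫ z, Real.exp (-(z * b (ss k))) ∂(Q k))) p :=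
        (Filter.eventually_all_finset _).mpr (fun k hk =>
          hind _ (ss k) p (ne_of_gt hp0)
            (hss_ne j hj k (Finset.mem_of_mem_erase hk)
              (Ne.symm (Finset.ne_of_mem_erase hk))))
      have hconst : ∀ᶠ t in nhdsWithin p (Set.Iio p),
          S t = S p + Real.log (∫ z, Real.exp (-(z * b p)) ∂(Q j)) := by
        filter_upwards [hj_ev, H.filter_mono (nhdsWithin_le_nhds (s := Set.Iio p))]
          with t ht1 ht2
        rw [hSdef]
        simp only
        rw [← Finset.add_sum_erase _ _ hj, ← Finset.add_sum_erase _ _ hj]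
        have hm1 : t ∈ Set.Ico (0:ℝ) (ss j) := by rw [← hpdef]; exact ht1
        have hm2 : p ∉ Set.Ico (0:ℝ) (ss j) := by rw [← hpdef]; exact fun h => lt_irrefl p h.2
        rw [Set.indicator_of_mem hm1, Set.indicator_of_notMem hm2]
        rw [Finset.sum_congr rfl (fun k hk => ht2 k hk)]
        rw [← hpdef]
        ring
      exact Filter.Tendsto.congr' (Filter.EventuallyEq.symm hconst) tendsto_const_nhds
    have haT : Filter.Tendsto a (nhdsWithin p (Set.Iio p))
        (nhds (a p - Real.log (∫ z, Real.exp (-(z * b p)) ∂(Q j)))) := by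
      have h := (hIten p hp0 hpT.le).sub hSt
      have hval : (∫ u in p..T, f u) - (S p + Real.log (∫ z, Real.exp (-(z * b p)) ∂(Q j)))
          = a p - Real.log (∫ z, Real.exp (-(z * b p)) ∂(Q j)) := by
        rw [ha' p]; ring
      rw [hval] at h
      exact Filter.Tendsto.congr' (Filter.Eventually.of_forall fun s => (ha' s).symm) h
    have hQposj : 0 < ∫ z, Real.exp (-(z * b p)) ∂(Q j) := hQpos j hj
    have hval : (∫ z, P p (x + z) ∂(Q j))
        = Real.exp (-(a p - Real.log (∫ z, Real.exp (-(z * b p)) ∂(Q j))) - x * b p) := by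
      have h1 : (fun z => P p (x+z)) = fun z =>
          Real.exp (-(a p) - x * b p) * Real.exp (-(z * b p)) := by
        funext z; rw [hP, ← Real.exp_add]; congr 1; ring
      rw [h1, integral_const_mul]
      rw [← Real.exp_log hQposj, ← Real.exp_add]
      congr 1
      rw [Real.log_exp]
      ring
    rw [hval]
    simp only [hP]
    exact (Real.continuous_exp.tendsto _).comp ((haT.neg).sub (hbl.const_mul x))
end

section
/- Let 0 < t₁ < ⋯ < t_N ≤ T, let α, γ, B, B₁, …, B_N : [0,T] → ℝ be continuous, and define b(u) := B(u) + Σ_{n=1}^N B_n(u)·1_{[0,t_n)}(u). Then for every t ∈ [0,T]: ∫ₜ^T (α(u)·b(u) − (1/2)·γ(u)·b(u)²) du = ∫ₜ^T (α(u)·B(u) − (1/2)·γ(u)·B(u)²) du + Σ_{n=1}^N 1_{[0,t_n)}(t)·∫ₜ^{t_n} ((α(u) − γ(u)·B(u))·B_n(u) − (1/2)·γ(u)·B_n(u)²) du − Σ_{n=1}^N Σ_{l=n+1}^N 1_{[0,t_n)}(t)·∫ₜ^{t_n} γ(u)·B_n(u)·B_l(u) du. -/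
open MeasureTheory Set

private lemma sq_sum_aux (N : ℕ) (x y : ℕ → ℝ)
    (hx : ∀ n l, n ∈ Finset.Icc 1 N → l ∈ Finset.Icc 1 N → n ≤ l → x n * x l = x n) :
    (∑ n ∈ Finset.Icc 1 N, x n * y n) ^ 2
      = ∑ n ∈ Finset.Icc 1 N, x n * (y n) ^ 2
        + 2 * ∑ n ∈ Finset.Icc 1 N, ∑ l ∈ Finset.Icc (n + 1) N, x n * (y n * y l) := by
  induction N with
  | zero => simp
  | succ N ih =>
    have hx' : ∀ n l, n ∈ Finset.Icc 1 N → l ∈ Finset.Icc 1 N → n ≤ l → x n * x l = x n := by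
      intro n l hn hl hnl
      simp only [Finset.mem_Icc] at hn hl ⊢
      exact hx n l (Finset.mem_Icc.2 ⟨hn.1, hn.2.trans (Nat.le_succ N)⟩)
        (Finset.mem_Icc.2 ⟨hl.1, hl.2.trans (Nat.le_succ N)⟩) hnl
    have h1 : (1:ℕ) ≤ N + 1 := Nat.le_add_left 1 N
    rw [Finset.sum_Icc_succ_top h1 (fun n => x n * y n),
        Finset.sum_Icc_succ_top h1 (fun n => x n * (y n)^2),
        Finset.sum_Icc_succ_top h1 (fun n => ∑ l ∈ Finset.Icc (n+1) (N+1), x n * (y n * y l))]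
    have hinner : ∀ n ∈ Finset.Icc 1 N,
        ∑ l ∈ Finset.Icc (n+1) (N+1), x n * (y n * y l)
          = (∑ l ∈ Finset.Icc (n+1) N, x n * (y n * y l)) + x n * (y n * y (N+1)) := by
      intro n hn
      have hn' := (Finset.mem_Icc.1 hn).2
      rw [Finset.sum_Icc_succ_top (Nat.succ_le_succ hn')]
    rw [Finset.sum_congr rfl hinner, Finset.sum_add_distrib]
    have hempty : Finset.Icc (N+1+1) (N+1) = ∅ := by
      apply Finset.Icc_eq_empty; omega
    rw [hempty, Finset.sum_empty]
    have hxN : x (N+1) * x (N+1) = x (N+1) :=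
      hx (N+1) (N+1) (Finset.mem_Icc.2 ⟨h1, le_refl _⟩) (Finset.mem_Icc.2 ⟨h1, le_refl _⟩) le_rfl
    have hcross : (∑ n ∈ Finset.Icc 1 N, x n * y n) * (x (N+1) * y (N+1))
        = ∑ n ∈ Finset.Icc 1 N, x n * (y n * y (N+1)) := by
      rw [Finset.sum_mul]
      apply Finset.sum_congr rfl
      intro n hn
      have hn' := Finset.mem_Icc.1 hn
      have hxx : x n * x (N+1) = x n := hx n (N+1)
        (Finset.mem_Icc.2 ⟨hn'.1, hn'.2.trans (Nat.le_succ N)⟩)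
        (Finset.mem_Icc.2 ⟨h1, le_refl _⟩) (hn'.2.trans (Nat.le_succ N))
      calc x n * y n * (x (N+1) * y (N+1)) = (x n * x (N+1)) * (y n * y (N+1)) := by ring
        _ = x n * (y n * y (N+1)) := by rw [hxx]
    have expand : (∑ n ∈ Finset.Icc 1 N, x n * y n + x (N+1) * y (N+1)) ^ 2
        = (∑ n ∈ Finset.Icc 1 N, x n * y n)^2
          + 2 * ((∑ n ∈ Finset.Icc 1 N, x n * y n) * (x (N+1) * y (N+1)))
          + (x (N+1) * x (N+1)) * (y (N+1))^2 := by ring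
    rw [expand, ih hx', hcross, hxN]
    ring

private lemma key_integral (T c t : ℝ) (f : ℝ → ℝ) (hcT : c ≤ T)
    (ht0 : 0 ≤ t) (htT : t ≤ T) :
    ∫ u in t..T, (Set.Ico (0 : ℝ) c).indicator f u
      = (Set.Ico (0 : ℝ) c).indicator (fun t' => ∫ u in t'..c, f u) t := by
  rw [intervalIntegral.integral_of_le htT, MeasureTheory.integral_Ioc_eq_integral_Ioo,
    ← MeasureTheory.integral_indicator measurableSet_Ioo]
  by_cases htc : t < c
  · have ht_mem : t ∈ Set.Ico (0:ℝ) c := ⟨ht0, htc⟩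
    rw [Set.indicator_of_mem ht_mem]
    have hset : ∀ u : ℝ, (Set.Ioo t T).indicator ((Set.Ico (0:ℝ) c).indicator f) u
        = (Set.Ioo t c).indicator f u := by
      intro u
      by_cases h1 : u ∈ Set.Ioo t c
      · obtain ⟨hu1, hu2⟩ := h1
        have m1 : u ∈ Set.Ioo t T := ⟨hu1, lt_of_lt_of_le hu2 hcT⟩
        have m2 : u ∈ Set.Ico (0:ℝ) c := ⟨le_of_lt (lt_of_le_of_lt ht0 hu1), hu2⟩
        have m3 : u ∈ Set.Ioo t c := ⟨hu1, hu2⟩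
        rw [Set.indicator_of_mem m1, Set.indicator_of_mem m2, Set.indicator_of_mem m3]
      · rw [Set.indicator_of_notMem h1]
        by_cases h2 : u ∈ Set.Ioo t T
        · have : u ∉ Set.Ico (0:ℝ) c := by
            intro hu; exact h1 ⟨h2.1, hu.2⟩
          rw [Set.indicator_of_mem h2, Set.indicator_of_notMem this]
        · rw [Set.indicator_of_notMem h2]
    simp only [hset]
    rw [MeasureTheory.integral_indicator measurableSet_Ioo,
      ← MeasureTheory.integral_Ioc_eq_integral_Ioo,
      ← intervalIntegral.integral_of_le (le_of_lt htc)]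
  · push_neg at htc
    have ht_nmem : t ∉ Set.Ico (0:ℝ) c := fun h => absurd h.2 (not_lt.2 htc)
    rw [Set.indicator_of_notMem ht_nmem]
    have hset : ∀ u : ℝ, (Set.Ioo t T).indicator ((Set.Ico (0:ℝ) c).indicator f) u = 0 := by
      intro u
      by_cases h2 : u ∈ Set.Ioo t T
      · have : u ∉ Set.Ico (0:ℝ) c := fun hu =>
          absurd (lt_of_le_of_lt htc h2.1) (not_lt.2 (le_of_lt hu.2))
        rw [Set.indicator_of_mem h2, Set.indicator_of_notMem this]
      · rw [Set.indicator_of_notMem h2]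
    simp only [hset, MeasureTheory.integral_zero]

private lemma indicator_intervalIntegrable (t T c : ℝ) (f : ℝ → ℝ)
    (hf : ContinuousOn f (Set.Icc 0 T)) (ht0 : 0 ≤ t) (htT : t ≤ T) :
    IntervalIntegrable ((Set.Ico (0:ℝ) c).indicator f) volume t T := by
  have hsub : Set.uIcc t T ⊆ Set.Icc 0 T := by
    rw [Set.uIcc_of_le htT]
    exact Set.Icc_subset_Icc ht0 le_rfl
  have h1 : IntervalIntegrable f volume t T := (hf.mono hsub).intervalIntegrable
  rw [intervalIntegrable_iff_integrableOn_Ioc_of_le htT] at h1 ⊢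
  exact h1.indicator measurableSet_Ico

set_option maxHeartbeats 1000000 in
/-- Integral decomposition of the coefficient `a(t,T) = ∫ₜ^T (αb − ½γb²)` of the
exponential-affine zero-coupon bond price when the duration coefficient decomposes as
`b(u) = B(u) + Σₙ Bₙ(u)·1_{[0,tₙ)}(u)`: it equals the continuous (no-jump) coefficient
plus correction terms `Aₙ(t)` and `C_{nl}(t)`. -/
theorem affine_coefficient_integral_decomposition
    (T : ℝ) (N : ℕ) (tt : ℕ → ℝ)
    (htt1 : 0 < tt 1)
    (htt_mono : ∀ n, 1 ≤ n → n + 1 ≤ N → tt n < tt (n + 1))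
    (httN : tt N ≤ T)
    (α γ B : ℝ → ℝ) (Bfun : ℕ → ℝ → ℝ)
    (hα : ContinuousOn α (Set.Icc 0 T)) (hγ : ContinuousOn γ (Set.Icc 0 T))
    (hB : ContinuousOn B (Set.Icc 0 T))
    (hBfun : ∀ n ∈ Finset.Icc 1 N, ContinuousOn (Bfun n) (Set.Icc 0 T))
    (b : ℝ → ℝ)
    (hb : ∀ u : ℝ, b u = B u +
      ∑ n ∈ Finset.Icc 1 N, (Set.Ico (0 : ℝ) (tt n)).indicator (Bfun n) u) :
    ∀ t ∈ Set.Icc (0 : ℝ) T,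
      (∫ u in t..T, (α u * b u - (1 / 2) * γ u * (b u) ^ 2)) =
        (∫ u in t..T, (α u * B u - (1 / 2) * γ u * (B u) ^ 2)) +
        (∑ n ∈ Finset.Icc 1 N,
          (Set.Ico (0 : ℝ) (tt n)).indicator
            (fun t' => ∫ u in t'..(tt n),
              ((α u - γ u * B u) * Bfun n u - (1 / 2) * γ u * (Bfun n u) ^ 2)) t) -
        (∑ n ∈ Finset.Icc 1 N, ∑ l ∈ Finset.Icc (n + 1) N,
          (Set.Ico (0 : ℝ) (tt n)).indicator
            (fun t' => ∫ u in t'..(tt n), γ u * Bfun n u * Bfun l u) t) := by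
  intro t ht
  obtain ⟨ht0, htT⟩ := ht
  -- monotonicity of tt on [1,N]
  have hmono : ∀ n l, 1 ≤ n → n ≤ l → l ≤ N → tt n ≤ tt l := by
    intro n l hn hnl hlN
    induction l with
    | zero => omega
    | succ l ih =>
      rcases Nat.lt_or_ge n (l+1) with h | h
      · have hnl' : n ≤ l := by omega
        have h1l : 1 ≤ l := by omega
        exact le_trans (ih hnl' (by omega)) (le_of_lt (htt_mono l h1l hlN))
      · have : n = l + 1 := by omega
        subst this; rfl
  have htle : ∀ n ∈ Finset.Icc 1 N, tt n ≤ T := by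
    intro n hn
    obtain ⟨h1, h2⟩ := Finset.mem_Icc.1 hn
    exact le_trans (hmono n N h1 h2 le_rfl) httN
  -- the three integrand pieces
  set F : ℕ → ℝ → ℝ := fun n u => (α u - γ u * B u) * Bfun n u - (1 / 2) * γ u * (Bfun n u) ^ 2
    with hF
  set G : ℕ → ℕ → ℝ → ℝ := fun n l u => γ u * Bfun n u * Bfun l u with hG
  -- pointwise decomposition of the integrand
  have hpt : ∀ u : ℝ,
      α u * b u - (1 / 2) * γ u * (b u) ^ 2
        = (α u * B u - (1 / 2) * γ u * (B u) ^ 2)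
          + (∑ n ∈ Finset.Icc 1 N, (Set.Ico (0:ℝ) (tt n)).indicator (F n) u)
          - (∑ n ∈ Finset.Icc 1 N, ∑ l ∈ Finset.Icc (n+1) N,
              (Set.Ico (0:ℝ) (tt n)).indicator (G n l) u) := by
    intro u
    classical
    set x : ℕ → ℝ := fun n => if u ∈ Set.Ico (0:ℝ) (tt n) then (1:ℝ) else 0 with hxdef
    set y : ℕ → ℝ := fun n => Bfun n u with hydef
    have hind : ∀ (n : ℕ) (g : ℝ → ℝ), (Set.Ico (0:ℝ) (tt n)).indicator g u = x n * g u := by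
      intro n g
      simp only [hxdef, Set.indicator_apply]
      split <;> simp
    have hx : ∀ n l, n ∈ Finset.Icc 1 N → l ∈ Finset.Icc 1 N → n ≤ l → x n * x l = x n := by
      intro n l hn hl hnl
      obtain ⟨hn1, hnN⟩ := Finset.mem_Icc.1 hn
      obtain ⟨hl1, hlN⟩ := Finset.mem_Icc.1 hl
      have hle : tt n ≤ tt l := hmono n l hn1 hnl hlN
      simp only [hxdef]
      by_cases hu : u ∈ Set.Ico (0:ℝ) (tt n)
      · have hu' : u ∈ Set.Ico (0:ℝ) (tt l) := ⟨hu.1, lt_of_lt_of_le hu.2 hle⟩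
        simp [hu, hu']
      · simp [hu]
    have hbu : b u = B u + ∑ n ∈ Finset.Icc 1 N, x n * y n := by
      rw [hb u]
      congr 1
      exact Finset.sum_congr rfl fun n _ => hind n (Bfun n)
    have hsq := sq_sum_aux N x y hx
    have e1 : ∑ n ∈ Finset.Icc 1 N, (Set.Ico (0:ℝ) (tt n)).indicator (F n) u
        = (α u - γ u * B u) * (∑ n ∈ Finset.Icc 1 N, x n * y n)
          - (1/2) * γ u * (∑ n ∈ Finset.Icc 1 N, x n * (y n)^2) := by
      rw [Finset.mul_sum, Finset.mul_sum, ← Finset.sum_sub_distrib]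
      apply Finset.sum_congr rfl
      intro n _
      rw [hind n (F n)]
      simp only [hF, hydef]
      ring
    have e2 : ∑ n ∈ Finset.Icc 1 N, ∑ l ∈ Finset.Icc (n+1) N,
          (Set.Ico (0:ℝ) (tt n)).indicator (G n l) u
        = γ u * ∑ n ∈ Finset.Icc 1 N, ∑ l ∈ Finset.Icc (n+1) N, x n * (y n * y l) := by
      rw [Finset.mul_sum]
      apply Finset.sum_congr rfl
      intro n _
      rw [Finset.mul_sum]
      apply Finset.sum_congr rfl
      intro l _
      rw [hind n (G n l)]
      simp only [hG, hydef]
      ring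
    rw [hbu, e1, e2]
    linear_combination (-(1:ℝ)/2) * γ u * hsq
  -- integrability
  have hsub : Set.uIcc t T ⊆ Set.Icc 0 T := by
    rw [Set.uIcc_of_le htT]
    exact Set.Icc_subset_Icc ht0 le_rfl
  have hcont0 : ContinuousOn (fun u => α u * B u - (1 / 2) * γ u * (B u) ^ 2) (Set.Icc 0 T) :=
    (hα.mul hB).sub ((continuousOn_const.mul hγ).mul (hB.pow 2))
  have hint0 : IntervalIntegrable (fun u => α u * B u - (1 / 2) * γ u * (B u) ^ 2) volume t T :=
    (hcont0.mono hsub).intervalIntegrable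
  have hcontF : ∀ n ∈ Finset.Icc 1 N, ContinuousOn (F n) (Set.Icc 0 T) := by
    intro n hn
    exact ((hα.sub (hγ.mul hB)).mul (hBfun n hn)).sub
      ((continuousOn_const.mul hγ).mul ((hBfun n hn).pow 2))
  have hcontG : ∀ n ∈ Finset.Icc 1 N, ∀ l ∈ Finset.Icc (n+1) N,
      ContinuousOn (G n l) (Set.Icc 0 T) := by
    intro n hn l hl
    have hl' : l ∈ Finset.Icc 1 N := by
      simp only [Finset.mem_Icc] at hn hl ⊢
      omega
    exact (hγ.mul (hBfun n hn)).mul (hBfun l hl')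
  have hintF : ∀ n ∈ Finset.Icc 1 N,
      IntervalIntegrable ((Set.Ico (0:ℝ) (tt n)).indicator (F n)) volume t T := fun n hn =>
    indicator_intervalIntegrable t T (tt n) (F n) (hcontF n hn) ht0 htT
  have hintG : ∀ n ∈ Finset.Icc 1 N, ∀ l ∈ Finset.Icc (n+1) N,
      IntervalIntegrable ((Set.Ico (0:ℝ) (tt n)).indicator (G n l)) volume t T := fun n hn l hl =>
    indicator_intervalIntegrable t T (tt n) (G n l) (hcontG n hn l hl) ht0 htT
  have hintGsum : ∀ n ∈ Finset.Icc 1 N,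
      IntervalIntegrable (fun u => ∑ l ∈ Finset.Icc (n+1) N,
        (Set.Ico (0:ℝ) (tt n)).indicator (G n l) u) volume t T := by
    intro n hn
    have heq : (fun u => ∑ l ∈ Finset.Icc (n+1) N, (Set.Ico (0:ℝ) (tt n)).indicator (G n l) u)
        = ∑ l ∈ Finset.Icc (n+1) N, (Set.Ico (0:ℝ) (tt n)).indicator (G n l) := by
      ext u; simp
    rw [heq]
    exact IntervalIntegrable.sum _ fun l hl => hintG n hn l hl
  have hintFsumAll : IntervalIntegrable (fun u => ∑ n ∈ Finset.Icc 1 N,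
      (Set.Ico (0:ℝ) (tt n)).indicator (F n) u) volume t T := by
    have heq : (fun u => ∑ n ∈ Finset.Icc 1 N, (Set.Ico (0:ℝ) (tt n)).indicator (F n) u)
        = ∑ n ∈ Finset.Icc 1 N, (Set.Ico (0:ℝ) (tt n)).indicator (F n) := by
      ext u; simp
    rw [heq]
    exact IntervalIntegrable.sum _ fun n hn => hintF n hn
  have hintGsumAll : IntervalIntegrable (fun u => ∑ n ∈ Finset.Icc 1 N,
      ∑ l ∈ Finset.Icc (n+1) N, (Set.Ico (0:ℝ) (tt n)).indicator (G n l) u) volume t T := by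
    have heq : (fun u => ∑ n ∈ Finset.Icc 1 N, ∑ l ∈ Finset.Icc (n+1) N,
          (Set.Ico (0:ℝ) (tt n)).indicator (G n l) u)
        = ∑ n ∈ Finset.Icc 1 N, (fun u => ∑ l ∈ Finset.Icc (n+1) N,
            (Set.Ico (0:ℝ) (tt n)).indicator (G n l) u) := by
      ext u; simp
    rw [heq]
    exact IntervalIntegrable.sum _ fun n hn => hintGsum n hn
  -- rewrite the integral
  have hcongr : (∫ u in t..T, (α u * b u - (1 / 2) * γ u * (b u) ^ 2))
      = ∫ u in t..T, ((α u * B u - (1 / 2) * γ u * (B u) ^ 2)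
          + (∑ n ∈ Finset.Icc 1 N, (Set.Ico (0:ℝ) (tt n)).indicator (F n) u)
          - (∑ n ∈ Finset.Icc 1 N, ∑ l ∈ Finset.Icc (n+1) N,
              (Set.Ico (0:ℝ) (tt n)).indicator (G n l) u)) := by
    apply intervalIntegral.integral_congr
    intro u _
    exact hpt u
  rw [hcongr, intervalIntegral.integral_sub (hint0.add hintFsumAll) hintGsumAll,
    intervalIntegral.integral_add hint0 hintFsumAll,
    intervalIntegral.integral_finset_sum (fun n hn => hintF n hn),
    intervalIntegral.integral_finset_sum (fun n hn => hintGsum n hn)]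
  congr 1
  · congr 1
    apply Finset.sum_congr rfl
    intro n hn
    exact key_integral T (tt n) t (F n) (htle n hn) ht0 htT
  · apply Finset.sum_congr rfl
    intro n hn
    rw [intervalIntegral.integral_finset_sum (fun l hl => hintG n hn l hl)]
    apply Finset.sum_congr rfl
    intro l hl
    exact key_integral T (tt n) t (G n l) (htle n hn) ht0 htT
end

section
/- Let β < 0, let 0 < T < S, and let 0 < t₁ < ⋯ < t_N < S be roll-over dates with t_n ≠ T for all n. For U ∈ {T, S} define b(t,U) := (e^{β(U−t)} − 1)/β + Σ_{n : t_n < U} e^{β(t_n−t)}·1_{[0,t_n)}(t). Then for every t ∈ [0,T]: b(t,S) − b(t,T) = e^{β(T−t)}·b(T,S). -/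
/-- In the Vasicek model with `β < 0` and roll-over dates `0 < t₁ < ⋯ < t_N < S`
(none equal to `T`), the duration coefficients
`b(t,U) = (e^{β(U−t)} − 1)/β + Σ_{tₙ<U} e^{β(tₙ−t)}·1_{[0,tₙ)}(t)` satisfy
`b(t,S) − b(t,T) = e^{β(T−t)}·b(T,S)` for every `t ∈ [0,T]`. -/
theorem vasicek_duration_difference
    (β T S : ℝ) (hβ : β < 0) (hT : 0 < T) (hTS : T < S)
    (N : ℕ) (tt : ℕ → ℝ)
    (htt1 : 0 < tt 1)
    (htt_mono : ∀ n, 1 ≤ n → n + 1 ≤ N → tt n < tt (n + 1))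
    (httS : tt N < S)
    (httT : ∀ n ∈ Finset.Icc 1 N, tt n ≠ T)
    (b : ℝ → ℝ → ℝ)
    (hb : ∀ t U : ℝ, b t U = (Real.exp (β * (U - t)) - 1) / β +
      ∑ n ∈ Finset.Icc 1 N,
        if tt n < U then
          (Set.Ico (0 : ℝ) (tt n)).indicator (fun t' => Real.exp (β * (tt n - t'))) t
        else 0) :
    ∀ t ∈ Set.Icc (0 : ℝ) T,
      b t S - b t T = Real.exp (β * (T - t)) * b T S := by
  intro t ht
  obtain ⟨ht0, htT⟩ := ht
  have hmono : ∀ n m : ℕ, 1 ≤ m → m ≤ n → n ≤ N → tt m ≤ tt n := by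
    intro n
    induction n with
    | zero => intro m hm hmn _; omega
    | succ k ih =>
      intro m hm hmn hk
      rcases eq_or_lt_of_le hmn with h | h
      · rw [h]
      · calc tt m ≤ tt k := ih m hm (by omega) (by omega)
          _ ≤ tt (k+1) := (htt_mono k (by omega) hk).le
  have hS : ∀ n ∈ Finset.Icc 1 N, tt n < S := by
    intro n hn
    simp only [Finset.mem_Icc] at hn
    exact lt_of_le_of_lt (hmono N n hn.1 hn.2 le_rfl) httS
  rw [hb t S, hb t T, hb T S]
  have key : ∀ n ∈ Finset.Icc 1 N,
      ((if tt n < S then (Set.Ico (0:ℝ) (tt n)).indicator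
          (fun t' => Real.exp (β * (tt n - t'))) t else 0)
        - (if tt n < T then (Set.Ico (0:ℝ) (tt n)).indicator
          (fun t' => Real.exp (β * (tt n - t'))) t else 0))
      = Real.exp (β * (T - t)) * (if tt n < S then (Set.Ico (0:ℝ) (tt n)).indicator
          (fun t' => Real.exp (β * (tt n - t'))) T else 0) := by
    intro n hn
    have hnS := hS n hn
    have hnT := httT n hn
    rw [if_pos hnS, if_pos hnS]
    rcases lt_or_gt_of_ne hnT with h | h
    · rw [if_pos h]
      have hTnot : (T : ℝ) ∉ Set.Ico (0:ℝ) (tt n) := by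
        simp [Set.mem_Ico, not_lt.mpr h.le]
      rw [Set.indicator_of_notMem hTnot, sub_self, mul_zero]
    · rw [if_neg (not_lt.mpr h.le)]
      have h1 : t ∈ Set.Ico (0:ℝ) (tt n) := ⟨ht0, lt_of_le_of_lt htT h⟩
      have h2 : T ∈ Set.Ico (0:ℝ) (tt n) := ⟨hT.le, h⟩
      rw [Set.indicator_of_mem h1, Set.indicator_of_mem h2, sub_zero, ← Real.exp_add]
      ring_nf
  have hsum : (∑ n ∈ Finset.Icc 1 N, if tt n < S then (Set.Ico (0:ℝ) (tt n)).indicator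
          (fun t' => Real.exp (β * (tt n - t'))) t else 0)
      - (∑ n ∈ Finset.Icc 1 N, if tt n < T then (Set.Ico (0:ℝ) (tt n)).indicator
          (fun t' => Real.exp (β * (tt n - t'))) t else 0)
    = ∑ n ∈ Finset.Icc 1 N, Real.exp (β * (T - t)) *
        (if tt n < S then (Set.Ico (0:ℝ) (tt n)).indicator
          (fun t' => Real.exp (β * (tt n - t'))) T else 0) := by
    rw [← Finset.sum_sub_distrib]
    exact Finset.sum_congr rfl key
  have hexp : Real.exp (β * (T - t)) * ((Real.exp (β * (S - T)) - 1) / β)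
      = (Real.exp (β * (S - t)) - Real.exp (β * (T - t))) / β := by
    have h : Real.exp (β * (T - t)) * Real.exp (β * (S - T)) = Real.exp (β * (S - t)) := by
      rw [← Real.exp_add]; ring_nf
    linear_combination h / β
  rw [mul_add, Finset.mul_sum, ← hsum]
  linear_combination -hexp
end
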